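/- arXiv:2101.07386 — 9 statements merged into one kernel-verified Lean document; each statement's English description precedes it below -/
import Mathlib

section
/- Let Ω₁ ⊆ ℂ be nonempty open and connected, Ω₂ ⊆ ℂ be open, and let φ : 𝒜(Ω₁) → 𝒜(Ω₂) be a ring isomorphism. Then there exists a bijection γ : Ω₁ → Ω₂ which is either conformal or anti-conformal, such that either φ(f) = f ∘ γ⁻¹ for all f ∈ 𝒜(Ω₁), or φ(f) = conj ∘ (f ∘ γ⁻¹) for all f ∈ 𝒜(Ω₁) (where conj denotes complex conjugation). -/
/-!
A point `z ∈ Ω` is recovered algebraically from `𝒜(Ω)`: the `ℂ`-algebra characters of `𝒜(Ω)` are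
exactly the evaluations, because `f - f(a) = (z - a) g` and `z - a` is a unit when `a ∉ Ω`.
Connectedness is the absence of nontrivial idempotents, so `Ω₂` is connected as well. Then
`φ(i)`, a square root of `-1`, is constant, so `φ` maps the constants of the dense field `ℚ(i)` to
constants; a nonconstant `φ(c)` would be an open map, take a value `t ∈ ℚ(i)`, and
`c - φ⁻¹(t)` would be a nonzero constant that is not a unit. So `φ` induces an automorphism `σ`
of `ℂ` and `φ f = σ ∘ f ∘ δ` for a bijection `δ : Ω₂ → Ω₁`.

It remains to see that `σ` is the identity or the conjugation, i.e. agrees with its value on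
`ℚ(i)` everywhere. Along the points `xₙ = z₀ + 1/n`, which `σ` only translates, the injective
holomorphic function `φ(z) = σ ∘ δ` shows that `γ = δ⁻¹` is continuous. An entire `F` with
`F(z₀) = c` and `F(xₙ) ∈ ℚ(i)` (a Newton series) then gives `σ(c) = lim σ(F(xₙ))`.
-/

open Complex Filter Topology Set

noncomputable section

/-- `𝒜(Ω)`, encoded as the functions on the subtype `Ω` that extend to a function differentiable
on `Ω`. -/
def analyticAlg (Ω : Set ℂ) : Subalgebra ℂ (Ω → ℂ) where
  carrier := {f | ∃ F : ℂ → ℂ, DifferentiableOn ℂ F Ω ∧ ∀ z : Ω, F z = f z}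
  add_mem' := by
    rintro f g ⟨F, hF, hFf⟩ ⟨G, hG, hGg⟩
    exact ⟨F + G, hF.add hG, fun z => by simp [hFf z, hGg z]⟩
  mul_mem' := by
    rintro f g ⟨F, hF, hFf⟩ ⟨G, hG, hGg⟩
    exact ⟨F * G, hF.mul hG, fun z => by simp [hFf z, hGg z]⟩
  algebraMap_mem' := fun r => ⟨fun _ => r, differentiableOn_const r, fun _ => rfl⟩

namespace analyticAlg

variable {Ω : Set ℂ}

@[simp]
lemma val_algebraMap_apply (c : ℂ) (z : Ω) : (algebraMap ℂ (analyticAlg Ω) c).1 z = c := rfl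

lemma ext {f g : analyticAlg Ω} (h : ∀ z, f.1 z = g.1 z) : f = g :=
  Subtype.ext (funext h)

lemma continuous_val (f : analyticAlg Ω) : Continuous f.1 := by
  obtain ⟨F, hF, hFf⟩ := f.2
  rw [show f.1 = Ω.domRestrict F from funext fun z => (hFf z).symm]
  exact hF.continuousOn.domRestrict

def coordinate (Ω : Set ℂ) : analyticAlg Ω :=
  ⟨fun z => z, id, differentiableOn_id, fun _ => rfl⟩

@[simp]
lemma coordinate_apply (z : Ω) : (coordinate Ω).1 z = z := rfl

def evalAt (z : Ω) : analyticAlg Ω →ₐ[ℂ] ℂ :=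
  (Pi.evalAlgHom ℂ (fun _ => ℂ) z).comp (analyticAlg Ω).val

@[simp]
lemma evalAt_apply (z : Ω) (f : analyticAlg Ω) : evalAt z f = f.1 z := rfl

lemma isUnit_iff_forall_ne_zero {f : analyticAlg Ω} : IsUnit f ↔ ∀ z, f.1 z ≠ 0 := by
  refine ⟨fun hf z => (hf.map (evalAt z)).ne_zero, fun hf => ?_⟩
  obtain ⟨F, hF, hFf⟩ := f.2
  have hinv : (fun z => (f.1 z)⁻¹) ∈ analyticAlg Ω :=
    ⟨fun z => (F z)⁻¹, fun z hz => (hF z hz).inv (by simpa [hFf ⟨z, hz⟩] using hf ⟨z, hz⟩),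
      fun z => congrArg (·⁻¹) (hFf z)⟩
  exact IsUnit.of_mul_eq_one (a := f) ⟨_, hinv⟩ (ext fun z => mul_inv_cancel₀ (hf z))

lemma exists_sub_eq_mul (hΩ : IsOpen Ω) (f : analyticAlg Ω) (a : Ω) :
    ∃ g, f - algebraMap ℂ _ (f.1 a) = (coordinate Ω - algebraMap ℂ _ (a : ℂ)) * g := by
  obtain ⟨F, hF, hFf⟩ := f.2
  refine ⟨⟨fun z => dslope F a z, dslope F a,
    (differentiableOn_dslope (hΩ.mem_nhds a.2)).2 hF, fun _ => rfl⟩, ext fun z => ?_⟩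
  simpa [← hFf] using (sub_smul_dslope F a z).symm

theorem exists_eq_apply_of_algHom (hΩ : IsOpen Ω) (χ : analyticAlg Ω →ₐ[ℂ] ℂ) :
    ∃ z : Ω, ∀ f, χ f = f.1 z := by
  set a := χ (coordinate Ω)
  have hker : χ (coordinate Ω - algebraMap ℂ _ a) = 0 := by simp [a]
  have ha : a ∈ Ω := by
    by_contra ha
    have hunit : IsUnit (coordinate Ω - algebraMap ℂ _ a) :=
      isUnit_iff_forall_ne_zero.2 fun z => sub_ne_zero.2 fun h => ha <| by
        simp only [coordinate_apply, val_algebraMap_apply] at h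
        exact h ▸ z.2
    exact (hunit.map χ).ne_zero hker
  refine ⟨⟨a, ha⟩, fun f => ?_⟩
  obtain ⟨g, hg⟩ := exists_sub_eq_mul hΩ f ⟨a, ha⟩
  simpa [sub_eq_zero, hker] using congrArg χ hg

lemma apply_eq_of_mapsTo_finite (hΩ : IsPreconnected Ω) (f : analyticAlg Ω) {T : Set ℂ}
    (hT : T.Finite) (hfT : ∀ z, f.1 z ∈ T) (z z' : Ω) : f.1 z = f.1 z' :=
  haveI := isPreconnected_iff_preconnectedSpace.1 hΩ
  isPreconnected_univ.constant_of_mapsTo hT.isDiscrete (continuous_val f).continuousOn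
    (fun z _ => hfT z) trivial trivial

lemma eq_zero_or_eq_one_of_isIdempotentElem (hΩ : IsPreconnected Ω) {e : analyticAlg Ω}
    (he : IsIdempotentElem e) : e = 0 ∨ e = 1 := by
  have hval z : e.1 z ∈ ({0, 1} : Set ℂ) :=
    IsIdempotentElem.iff_eq_zero_or_one.1 (he.map (evalAt z))
  rcases isEmpty_or_nonempty Ω with hempty | hne
  · exact Or.inl (ext fun z => isEmptyElim z)
  · obtain ⟨z₀⟩ := hne
    have hconst z := apply_eq_of_mapsTo_finite hΩ e (toFinite _) hval z z₀
    rcases hval z₀ with h | h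
    · exact Or.inl (ext fun z => (hconst z).trans h)
    · exact Or.inr (ext fun z => (hconst z).trans h)

lemma indicator_mem (hΩ : IsOpen Ω) {s : Set Ω} (hs : IsClopen s) :
    s.indicator 1 ∈ analyticAlg Ω := by
  have hopen {t : Set Ω} (ht : IsOpen t) : IsOpen (((↑) : Ω → ℂ) '' t) :=
    hΩ.isOpenMap_subtype_val t ht
  refine ⟨(((↑) : Ω → ℂ) '' s).indicator 1, fun z hz => ?_, fun z => ?_⟩
  · by_cases hzs : (⟨z, hz⟩ : Ω) ∈ s
    · have : (((↑) : Ω → ℂ) '' s).indicator 1 =ᶠ[𝓝 z] fun _ => (1 : ℂ) :=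
        eventuallyEq_of_mem ((hopen hs.isOpen).mem_nhds ⟨_, hzs, rfl⟩)
          fun y hy => indicator_of_mem hy 1
      exact (this.differentiableAt_iff.2 (differentiableAt_const _)).differentiableWithinAt
    · have : (((↑) : Ω → ℂ) '' s).indicator 1 =ᶠ[𝓝 z] fun _ => (0 : ℂ) := by
        refine eventuallyEq_of_mem ((hopen hs.compl.isOpen).mem_nhds ⟨_, hzs, rfl⟩) ?_
        rintro _ ⟨y, hy, rfl⟩
        exact indicator_of_notMem (by simpa using hy) 1
      exact (this.differentiableAt_iff.2 (differentiableAt_const _)).differentiableWithinAt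
  · by_cases hz : z ∈ s <;> simp [hz]

lemma isPreconnected_of_isIdempotentElem (hΩ : IsOpen Ω)
    (h : ∀ e : analyticAlg Ω, IsIdempotentElem e → e = 0 ∨ e = 1) : IsPreconnected Ω := by
  refine isPreconnected_iff_preconnectedSpace.2 (preconnectedSpace_iff_clopen.2 fun s hs => ?_)
  have he : IsIdempotentElem (⟨_, indicator_mem hΩ hs⟩ : analyticAlg Ω) :=
    Subtype.ext (funext fun z => by by_cases hz : z ∈ s <;> simp [hz])
  refine (h _ he).imp (fun h0 => ?_) (fun h1 => ?_)
  · exact eq_empty_of_forall_notMem fun z hz => by simpa [hz] using congrArg (·.1 z) h0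
  · exact eq_univ_of_forall fun z => by
      by_contra hz
      simpa [hz] using congrArg (·.1 z) h1

lemma exists_eq_algebraMap_or_isOpen_range (hΩ : IsOpen Ω) (hc : IsPreconnected Ω)
    (f : analyticAlg Ω) : (∃ d, f = algebraMap ℂ _ d) ∨ IsOpen (range f.1) := by
  obtain ⟨F, hF, hFf⟩ := f.2
  have hrange : range f.1 = F '' Ω := by
    ext; simp [← hFf]
  refine ((hF.analyticOnNhd hΩ).is_constant_or_isOpen hc).imp (fun hconst => ?_) (fun h => ?_)
  · obtain ⟨d, hd⟩ := hconst
    exact ⟨d, ext fun z => by simp [← hFf, hd z z.2]⟩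
  · exact hrange ▸ h Ω subset_rfl hΩ

lemma tendsto_of_injective {α : Type*} (hΩ : IsOpen Ω) {h : analyticAlg Ω}
    (hinj : Function.Injective h.1) {l : Filter α} {u : α → Ω} {w : Ω}
    (hu : Tendsto (fun n => h.1 (u n)) l (𝓝 (h.1 w))) : Tendsto u l (𝓝 w) := by
  obtain ⟨H, hH, hHh⟩ := h.2
  have hΩw : Ω ∈ 𝓝 (w : ℂ) := hΩ.mem_nhds w.2
  have hnotconst : ¬ ∀ᶠ y in 𝓝 (w : ℂ), H y = H w := fun hconst => by
    obtain ⟨y, ⟨hy, hyΩ⟩, hyw⟩ :=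
      ((hconst.and hΩw).filter_mono (nhdsWithin_le_nhds (s := {(w : ℂ)}ᶜ)) |>.and
        self_mem_nhdsWithin).exists
    exact hyw (congrArg Subtype.val (@hinj ⟨y, hyΩ⟩ w (by rw [← hHh, ← hHh, hy])))
  have hopen := ((hH.analyticAt hΩw).eventually_constant_or_nhds_le_map_nhds).resolve_left
    hnotconst
  refine tendsto_subtype_rng.2 fun s hs => ?_
  have himage : H '' (s ∩ Ω) ∈ 𝓝 (h.1 w) := hHh w ▸ hopen (image_mem_map (inter_mem hs hΩw))
  have : ∀ᶠ n in l, (u n : ℂ) ∈ s := Eventually.mono (hu himage) fun n ⟨y, ⟨hys, hyΩ⟩, hy⟩ => by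
    rwa [← @hinj ⟨y, hyΩ⟩ (u n) (by rw [← hHh, hy])]
  exact this

end analyticAlg

open analyticAlg

section NewtonInterpolation

variable (z₀ c : ℂ) (x : ℕ → ℂ) (T : ℕ → ℂ → ℂ)

def nodePoly (n : ℕ) (z : ℂ) : ℂ :=
  (z - z₀) * ∏ k ∈ Finset.range n, (z - x k)

/-- Partial sums of a Newton series with nodes `z₀, x 0, x 1, …`, constant term `c`, whose
coefficients are chosen one at a time so that the `(m + 1)`-st partial sum takes the value
`T m u` at `x m`, where `u` is the value of the `m`-th partial sum there. -/
def newtonSum : ℕ → ℂ → ℂ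
  | 0 => fun _ => c
  | m + 1 => fun z => newtonSum m z +
      (T m (newtonSum m (x m)) - newtonSum m (x m)) / nodePoly z₀ x m (x m) * nodePoly z₀ x m z

def newtonCoeff (m : ℕ) : ℂ :=
  (T m (newtonSum z₀ c x T m (x m)) - newtonSum z₀ c x T m (x m)) / nodePoly z₀ x m (x m)

variable {z₀ x}

lemma nodePoly_self (n : ℕ) : nodePoly z₀ x n z₀ = 0 := by
  simp [nodePoly]

lemma nodePoly_of_lt {m n : ℕ} (h : m < n) : nodePoly z₀ x n (x m) = 0 :=
  mul_eq_zero_of_right _ (Finset.prod_eq_zero (Finset.mem_range.2 h) (sub_self _))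

lemma nodePoly_ne_zero (hx : Function.Injective x) (hx₀ : ∀ n, x n ≠ z₀) (m : ℕ) :
    nodePoly z₀ x m (x m) ≠ 0 :=
  mul_ne_zero (sub_ne_zero.2 (hx₀ m)) <| Finset.prod_ne_zero_iff.2 fun _ hk =>
    sub_ne_zero.2 (hx.ne (Finset.mem_range.1 hk).ne')

lemma differentiable_nodePoly (n : ℕ) : Differentiable ℂ (nodePoly z₀ x n) := by
  unfold nodePoly; fun_prop

lemma norm_nodePoly_le {R : ℝ} (hz₀ : ‖z₀‖ ≤ R) (hx : ∀ k, ‖x k‖ ≤ R) (n : ℕ) (z : ℂ) :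
    ‖nodePoly z₀ x n z‖ ≤ (‖z‖ + R) ^ (n + 1) := by
  have hle {y : ℂ} (hy : ‖y‖ ≤ R) : ‖z - y‖ ≤ ‖z‖ + R := (norm_sub_le z y).trans (by linarith)
  calc ‖nodePoly z₀ x n z‖ = ‖z - z₀‖ * ∏ k ∈ Finset.range n, ‖z - x k‖ := by
        rw [nodePoly, norm_mul, norm_prod]
    _ ≤ (‖z‖ + R) * ∏ _k ∈ Finset.range n, (‖z‖ + R) := by
        exact mul_le_mul (hle hz₀) (Finset.prod_le_prod (fun _ _ => norm_nonneg _)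
          fun k _ => hle (hx k)) (Finset.prod_nonneg fun _ _ => norm_nonneg _)
          ((norm_nonneg _).trans (hle hz₀))
    _ = (‖z‖ + R) ^ (n + 1) := by rw [Finset.prod_const, Finset.card_range, pow_succ']

lemma newtonSum_eq (n : ℕ) (z : ℂ) :
    newtonSum z₀ c x T n z =
      c + ∑ k ∈ Finset.range n, newtonCoeff z₀ c x T k * nodePoly z₀ x k z := by
  induction n with
  | zero => simp [newtonSum]
  | succ m ih => rw [Finset.sum_range_succ, ← add_assoc, ← ih]; rfl

lemma newtonSum_succ_self (hx : Function.Injective x) (hx₀ : ∀ n, x n ≠ z₀) (m : ℕ) :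
    newtonSum z₀ c x T (m + 1) (x m) = T m (newtonSum z₀ c x T m (x m)) := by
  simp only [newtonSum]
  field_simp [nodePoly_ne_zero hx hx₀ m]
  ring

lemma norm_newtonCoeff_le (hx : Function.Injective x) (hx₀ : ∀ n, x n ≠ z₀)
    (hT : ∀ m u, ‖T m u - u‖ ≤ ‖nodePoly z₀ x m (x m)‖ / m.factorial) (m : ℕ) :
    ‖newtonCoeff z₀ c x T m‖ ≤ (m.factorial : ℝ)⁻¹ := by
  rw [newtonCoeff, norm_div, div_le_iff₀ (norm_pos_iff.2 (nodePoly_ne_zero hx hx₀ m))]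
  simpa [div_eq_inv_mul] using hT m _

end NewtonInterpolation

theorem exists_differentiable_eq_and_mem_of_dense {D : Set ℂ} (hD : Dense D) (z₀ c : ℂ)
    {x : ℕ → ℂ} (hx : Function.Injective x) (hx₀ : ∀ n, x n ≠ z₀) {R : ℝ} (hz₀ : ‖z₀‖ ≤ R)
    (hxR : ∀ n, ‖x n‖ ≤ R) :
    ∃ F : ℂ → ℂ, Differentiable ℂ F ∧ F z₀ = c ∧ ∀ n, F (x n) ∈ D := by
  have hpos m : 0 < ‖nodePoly z₀ x m (x m)‖ / m.factorial :=
    div_pos (norm_pos_iff.2 (nodePoly_ne_zero hx hx₀ m)) (by positivity)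
  choose T hTD hTdist using fun m u => hD.exists_dist_lt u (hpos m)
  have hT m u : ‖T m u - u‖ ≤ ‖nodePoly z₀ x m (x m)‖ / m.factorial := by
    rw [← dist_eq_norm, dist_comm]; exact (hTdist m u).le
  set a := newtonCoeff z₀ c x T
  have hterm (ρ : ℝ) (n : ℕ) (z : ℂ) (hz : ‖z‖ ≤ ρ) :
      ‖a n * nodePoly z₀ x n z‖ ≤ (ρ + R) ^ (n + 1) / n.factorial := by
    rw [norm_mul, div_eq_inv_mul]
    have hR : 0 ≤ R := (norm_nonneg _).trans hz₀
    exact mul_le_mul (norm_newtonCoeff_le c T hx hx₀ hT n)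
      ((norm_nodePoly_le hz₀ hxR n z).trans (by gcongr)) (norm_nonneg _) (by positivity)
  have hsummable (ρ : ℝ) : Summable fun n : ℕ => (ρ + R) ^ (n + 1) / n.factorial := by
    simpa [pow_succ, mul_div_right_comm] using
      (Real.summable_pow_div_factorial (ρ + R)).mul_right (ρ + R)
  refine ⟨fun z => c + ∑' n, a n * nodePoly z₀ x n z, fun z => ?_, ?_, fun m => ?_⟩
  · have hdiff := differentiableOn_tsum_of_summable_norm (hsummable (‖z‖ + 1))
      (fun n => ((differentiable_nodePoly n).const_mul (a n)).differentiableOn)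
      (Metric.isOpen_ball (x := 0)) fun n w hw => hterm _ n w (mem_ball_zero_iff.1 hw).le
    exact ((hdiff.const_add c).differentiableAt (Metric.isOpen_ball.mem_nhds (by simp)))
  · simp [nodePoly_self]
  · beta_reduce
    rw [tsum_eq_sum (s := Finset.range (m + 1)) fun n hn => by
      rw [nodePoly_of_lt (by simpa using hn), mul_zero], ← newtonSum_eq,
      newtonSum_succ_self c T hx hx₀]
    exact hTD m _

theorem dense_of_I_mem (K : Subfield ℂ) (hI : I ∈ K) : Dense (K : Set ℂ) := by
  have hrange : DenseRange fun p : ℚ × ℚ => (p.1 : ℂ) + p.2 * I := by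
    convert equivRealProdCLM.symm.surjective.denseRange.comp
      (Rat.denseRange_cast.prodMap Rat.denseRange_cast) equivRealProdCLM.symm.continuous using 1
    ext p
    simp [equivRealProdCLM_symm_apply]
  exact hrange.mono <| range_subset_iff.2 fun p =>
    K.add_mem (SubfieldClass.ratCast_mem K _) (K.mul_mem (SubfieldClass.ratCast_mem K _) hI)

section RingIsomorphism

variable {Ω₁ Ω₂ : Set ℂ}

theorem nonempty_of_ringEquiv (φ : analyticAlg Ω₁ ≃+* analyticAlg Ω₂) (hne : Ω₁.Nonempty) :
    Ω₂.Nonempty := by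
  obtain ⟨z, hz⟩ := hne
  by_contra h
  have : IsEmpty Ω₂ := ⟨fun w => h ⟨w, w.2⟩⟩
  have h10 : (1 : analyticAlg Ω₂) = 0 := ext isEmptyElim
  simpa using congrArg (fun f => (φ.symm f).1 ⟨z, hz⟩) h10

theorem isPreconnected_of_ringEquiv (hΩ₂ : IsOpen Ω₂) (hc₁ : IsPreconnected Ω₁)
    (φ : analyticAlg Ω₁ ≃+* analyticAlg Ω₂) : IsPreconnected Ω₂ :=
  isPreconnected_of_isIdempotentElem hΩ₂ fun _ he =>
    (eq_zero_or_eq_one_of_isIdempotentElem hc₁ (he.map φ.symm)).imp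
      (map_eq_zero_iff _ φ.symm.injective).1 (map_eq_one_iff _ φ.symm.injective).1

def constMap (φ : analyticAlg Ω₁ ≃+* analyticAlg Ω₂) (w : Ω₂) : ℂ →+* ℂ :=
  ((evalAt w : analyticAlg Ω₂ →+* ℂ).comp φ).comp (algebraMap ℂ (analyticAlg Ω₁))

@[simp]
lemma constMap_apply (φ : analyticAlg Ω₁ ≃+* analyticAlg Ω₂) (w : Ω₂) (c : ℂ) :
    constMap φ w c = (φ (algebraMap ℂ _ c)).1 w := rfl

lemma constMap_I_eq (hc₂ : IsPreconnected Ω₂) (φ : analyticAlg Ω₁ ≃+* analyticAlg Ω₂)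
    (w w' : Ω₂) : constMap φ w I = constMap φ w' I := by
  refine apply_eq_of_mapsTo_finite hc₂ _ (toFinite {I, -I}) (fun w => ?_) w w'
  have : constMap φ w I ^ 2 = I ^ 2 := by rw [← map_pow, I_sq, map_neg, map_one]
  exact sq_eq_sq_iff_eq_or_eq_neg.1 this

theorem constMap_eq (hΩ₂ : IsOpen Ω₂) (hc₁ : IsPreconnected Ω₁) (hc₂ : IsPreconnected Ω₂)
    (φ : analyticAlg Ω₁ ≃+* analyticAlg Ω₂) (c : ℂ) (w w' : Ω₂) :
    constMap φ w c = constMap φ w' c := by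
  set k := φ (algebraMap ℂ _ c)
  rcases exists_eq_algebraMap_or_isOpen_range hΩ₂ hc₂ k with ⟨d, hd⟩ | hopen
  · simp [k, hd]
  set K := ⨅ z, ⨅ z', (constMap φ.symm z).eqLocusField (constMap φ.symm z')
  have hK : Dense (K : Set ℂ) := dense_of_I_mem K <| by
    simp only [K, Subfield.mem_iInf]
    exact fun z z' => constMap_I_eq hc₁ φ.symm z z'
  obtain ⟨_, ⟨v, rfl⟩, hvK⟩ := hK.inter_open_nonempty _ hopen ⟨_, w, rfl⟩
  set g := φ.symm (algebraMap ℂ _ (k.1 v))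
  have hg z z' : g.1 z = g.1 z' := by
    have hvK : k.1 v ∈ K := hvK
    simp only [K, Subfield.mem_iInf] at hvK
    exact hvK z z'
  have hnotunit : ¬ IsUnit (algebraMap ℂ _ c - g) := fun hu => by
    simpa [k, g] using isUnit_iff_forall_ne_zero.1 (hu.map φ) v
  obtain ⟨z, hz⟩ : ∃ z, c = g.1 z := by
    simpa [isUnit_iff_forall_ne_zero, sub_eq_zero] using hnotunit
  have hcg : algebraMap ℂ _ c = g := ext fun z' => by rw [val_algebraMap_apply, hz, hg]
  have hk : k = algebraMap ℂ _ (k.1 v) := (congrArg φ hcg).trans (φ.apply_symm_apply _)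
  change k.1 w = k.1 w'
  rw [hk]
  rfl

lemma map_algebraMap_eq_constMap (hΩ₂ : IsOpen Ω₂) (hc₁ : IsPreconnected Ω₁)
    (hc₂ : IsPreconnected Ω₂) (φ : analyticAlg Ω₁ ≃+* analyticAlg Ω₂) (w₀ : Ω₂) (c : ℂ) :
    φ (algebraMap ℂ _ c) = algebraMap ℂ _ (constMap φ w₀ c) :=
  ext fun w => constMap_eq hΩ₂ hc₁ hc₂ φ c w w₀

theorem exists_ringEquiv_map_algebraMap (hΩ₁ : IsOpen Ω₁) (hΩ₂ : IsOpen Ω₂)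
    (hc₁ : IsPreconnected Ω₁) (hc₂ : IsPreconnected Ω₂) (hne : Ω₁.Nonempty)
    (φ : analyticAlg Ω₁ ≃+* analyticAlg Ω₂) :
    ∃ σ : ℂ ≃+* ℂ, ∀ c, φ (algebraMap ℂ _ c) = algebraMap ℂ _ (σ c) := by
  obtain ⟨w₀, hw₀⟩ := nonempty_of_ringEquiv φ hne
  obtain ⟨z₀, hz₀⟩ := hne
  refine ⟨RingEquiv.ofBijective (constMap φ ⟨w₀, hw₀⟩) ⟨(constMap φ _).injective, fun d => ?_⟩,
    map_algebraMap_eq_constMap hΩ₂ hc₁ hc₂ φ _⟩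
  refine ⟨constMap φ.symm ⟨z₀, hz₀⟩ d, ?_⟩
  rw [constMap_apply, ← map_algebraMap_eq_constMap hΩ₁ hc₂ hc₁ φ.symm _ d,
    RingEquiv.apply_symm_apply]
  rfl

lemma leftInverse_of_apply_eq (φ : analyticAlg Ω₁ ≃+* analyticAlg Ω₂) (σ : ℂ ≃+* ℂ)
    {δ : Ω₂ → Ω₁} {γ : Ω₁ → Ω₂} (hδ : ∀ f w, (φ f).1 w = σ (f.1 (δ w)))
    (hγ : ∀ g z, (φ.symm g).1 z = σ.symm (g.1 (γ z))) : Function.LeftInverse δ γ := fun z => by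
  have := hγ (φ (coordinate Ω₁)) z
  rw [RingEquiv.symm_apply_apply, hδ, RingEquiv.symm_apply_apply] at this
  exact Subtype.ext this.symm

theorem exists_apply_eq_map_apply {Fφ : Type*} [FunLike Fφ (analyticAlg Ω₁) (analyticAlg Ω₂)]
    [RingHomClass Fφ (analyticAlg Ω₁) (analyticAlg Ω₂)] (hΩ₁ : IsOpen Ω₁) (φ : Fφ) (σ : ℂ ≃+* ℂ)
    (hσ : ∀ c, φ (algebraMap ℂ _ c) = algebraMap ℂ _ (σ c)) :
    ∃ δ : Ω₂ → Ω₁, ∀ f w, (φ f).1 w = σ (f.1 (δ w)) := by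
  have (w : Ω₂) : ∃ z : Ω₁, ∀ f, (φ f).1 w = σ (f.1 z) := by
    let χ : analyticAlg Ω₁ →ₐ[ℂ] ℂ :=
      { (σ.symm : ℂ →+* ℂ).comp ((evalAt w : analyticAlg Ω₂ →+* ℂ).comp (φ : _ →+* _)) with
        commutes' := fun c => by simp [hσ] }
    obtain ⟨z, hz⟩ := exists_eq_apply_of_algHom hΩ₁ χ
    exact ⟨z, fun f => σ.symm_apply_eq.1 (hz f)⟩
  choose δ hδ using this
  exact ⟨δ, fun f w => hδ w f⟩

theorem tendsto_map_apply_of_tendsto (hΩ₂ : IsOpen Ω₂) (φ : analyticAlg Ω₁ → analyticAlg Ω₂)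
    {σ : ℂ →+* ℂ} {δ : Ω₂ → Ω₁} {γ : Ω₁ → Ω₂} (hδ : ∀ f w, (φ f).1 w = σ (f.1 (δ w)))
    (hδγ : Function.LeftInverse δ γ) (hγδ : Function.LeftInverse γ δ) {α : Type*} {l : Filter α}
    {u : α → Ω₁} {z : Ω₁} (hu : Tendsto (fun n => σ (u n)) l (𝓝 (σ z))) (f : analyticAlg Ω₁) :
    Tendsto (fun n => σ (f.1 (u n))) l (𝓝 (σ (f.1 z))) := by
  have hinj : Function.Injective (φ (coordinate Ω₁)).1 := fun w w' h =>
    hγδ.injective (Subtype.ext (σ.injective (by simpa [hδ] using h)))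
  have hγu : Tendsto (γ ∘ u) l (𝓝 (γ z)) :=
    tendsto_of_injective hΩ₂ hinj (by simpa [hδ, hδγ _] using hu)
  simpa [Function.comp_def, hδ, hδγ _] using ((continuous_val (φ f)).tendsto (γ z)).comp hγu

theorem eq_of_dense_eqLocus (hΩ₁ : IsOpen Ω₁) (hne : Ω₁.Nonempty) (hΩ₂ : IsOpen Ω₂)
    (φ : analyticAlg Ω₁ → analyticAlg Ω₂) {σ τ : ℂ →+* ℂ} {δ : Ω₂ → Ω₁} {γ : Ω₁ → Ω₂}
    (hδ : ∀ f w, (φ f).1 w = σ (f.1 (δ w))) (hδγ : Function.LeftInverse δ γ)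
    (hγδ : Function.LeftInverse γ δ) (hτ : Continuous τ) (hdense : Dense {t | σ t = τ t}) :
    σ = τ := by
  ext c
  obtain ⟨z₀, hz₀⟩ := hne
  obtain ⟨r, hr, hball⟩ := Metric.isOpen_iff.1 hΩ₁ z₀ hz₀
  obtain ⟨N, hN⟩ := exists_nat_one_div_lt hr
  set q : ℕ → ℂ := fun n => ((n + N + 1 : ℕ) : ℂ)⁻¹
  have hqlim : Tendsto q atTop (𝓝 0) :=
    (tendsto_inv_atTop_nhds_zero_nat (𝕜 := ℂ)).comp (tendsto_add_atTop_nat (N + 1))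
  have hq n : ‖q n‖ ≤ 1 / (N + 1) := by
    simp only [q, norm_inv, Complex.norm_natCast, one_div]
    gcongr
    push_cast
    linarith [n.cast_nonneg (α := ℝ)]
  have hN1 : 1 / ((N : ℝ) + 1) ≤ 1 := div_le_one_of_le₀ (by simp) (by positivity)
  set x : ℕ → ℂ := fun n => z₀ + q n
  have hxΩ n : x n ∈ Ω₁ := hball (by simpa [x, dist_eq_norm] using (hq n).trans_lt hN)
  obtain ⟨F, hF, hFz₀, hFD⟩ := exists_differentiable_eq_and_mem_of_dense hdense z₀ c
    (x := x) (fun m n h => by simpa [x, q] using h)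
    (fun n => by simpa [x, q] using Nat.cast_add_one_ne_zero (R := ℂ) (n + N))
    (R := ‖z₀‖ + 1) (by linarith) fun n => (norm_add_le _ _).trans (by linarith [hq n])
  -- `σ` fixes the offsets `q n`, so it is continuous along `x`.
  have hσx : Tendsto (fun n => σ (x n)) atTop (𝓝 (σ z₀)) := by
    simpa [x, q] using tendsto_const_nhds.add hqlim
  have h₁ := tendsto_map_apply_of_tendsto hΩ₂ φ hδ hδγ hγδ (u := fun n => ⟨x n, hxΩ n⟩)
    (z := ⟨z₀, hz₀⟩) hσx ⟨fun z => F z, F, hF.differentiableOn, fun _ => rfl⟩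
  have h₂ := ((hτ.comp hF.continuous).tendsto z₀).comp
    (by simpa using tendsto_const_nhds.add hqlim : Tendsto x atTop (𝓝 z₀))
  simp only [Function.comp_def, hFz₀] at h₁ h₂
  exact tendsto_nhds_unique h₁ (h₂.congr fun n => (hFD n).symm)

theorem eq_id_or_eq_conj_of_apply_eq (hΩ₁ : IsOpen Ω₁) (hne : Ω₁.Nonempty) (hΩ₂ : IsOpen Ω₂)
    (φ : analyticAlg Ω₁ → analyticAlg Ω₂) {σ : ℂ →+* ℂ} {δ : Ω₂ → Ω₁} {γ : Ω₁ → Ω₂}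
    (hδ : ∀ f w, (φ f).1 w = σ (f.1 (δ w))) (hδγ : Function.LeftInverse δ γ)
    (hγδ : Function.LeftInverse γ δ) : σ = RingHom.id ℂ ∨ σ = starRingEnd ℂ := by
  have hI : σ I ^ 2 = I ^ 2 := by rw [← map_pow, I_sq, map_neg, map_one]
  refine (sq_eq_sq_iff_eq_or_eq_neg.1 hI).imp (fun h => ?_) (fun h => ?_)
  · exact eq_of_dense_eqLocus hΩ₁ hne hΩ₂ φ hδ hδγ hγδ continuous_id
      (dense_of_I_mem (σ.eqLocusField (RingHom.id ℂ)) h)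
  · exact eq_of_dense_eqLocus hΩ₁ hne hΩ₂ φ hδ hδγ hγδ continuous_conj
      (dense_of_I_mem (σ.eqLocusField (starRingEnd ℂ)) (by simpa using h))

end RingIsomorphism

/-- Bers' theorem. -/
theorem stmt1 (Ω₁ Ω₂ : Set ℂ) (h₁ : IsOpen Ω₁) (hc₁ : IsConnected Ω₁)
    (h₂ : IsOpen Ω₂)
    (φ : ↥(analyticAlg Ω₁) ≃+* ↥(analyticAlg Ω₂)) :
    ∃ (γ : Ω₁ → Ω₂) (δ : Ω₂ → Ω₁),
      Function.LeftInverse δ γ ∧ Function.RightInverse δ γ ∧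
      (((fun z : Ω₁ => (γ z : ℂ)) ∈ analyticAlg Ω₁ ∧
        (fun w : Ω₂ => (δ w : ℂ)) ∈ analyticAlg Ω₂ ∧
        ∀ (f : ↥(analyticAlg Ω₁)) (w : Ω₂), (φ f).1 w = f.1 (δ w)) ∨
       ((fun z : Ω₁ => (starRingEnd ℂ) (γ z : ℂ)) ∈ analyticAlg Ω₁ ∧
        (fun w : Ω₂ => (starRingEnd ℂ) (δ w : ℂ)) ∈ analyticAlg Ω₂ ∧
        ∀ (f : ↥(analyticAlg Ω₁)) (w : Ω₂),
          (φ f).1 w = (starRingEnd ℂ) (f.1 (δ w)))) := by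
  have hc₂ := isPreconnected_of_ringEquiv h₂ hc₁.isPreconnected φ
  obtain ⟨σ, hσ⟩ := exists_ringEquiv_map_algebraMap h₁ h₂ hc₁.isPreconnected hc₂ hc₁.nonempty φ
  have hσ' c : φ.symm (algebraMap ℂ _ c) = algebraMap ℂ _ (σ.symm c) :=
    φ.symm_apply_eq.2 (by rw [hσ, σ.apply_symm_apply])
  obtain ⟨δ, hδ⟩ := exists_apply_eq_map_apply h₁ φ σ hσ
  obtain ⟨γ, hγ⟩ := exists_apply_eq_map_apply h₂ φ.symm σ.symm hσ'
  have hδγ := leftInverse_of_apply_eq φ σ hδ hγ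
  have hγδ := leftInverse_of_apply_eq φ.symm σ.symm hγ (by simpa using hδ)
  have hγmem : (fun z : Ω₁ => σ.symm (γ z : ℂ)) ∈ analyticAlg Ω₁ := by
    simpa [funext (hγ (coordinate Ω₂))] using (φ.symm (coordinate Ω₂)).2
  have hδmem : (fun w : Ω₂ => σ (δ w : ℂ)) ∈ analyticAlg Ω₂ := by
    simpa [funext (hδ (coordinate Ω₁))] using (φ (coordinate Ω₁)).2
  refine ⟨γ, δ, hδγ, hγδ, ?_⟩
  rcases eq_id_or_eq_conj_of_apply_eq h₁ hc₁.nonempty h₂ φ (σ := σ) hδ hδγ hγδ with hid | hconj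
  · have hσc c : σ c = c := RingHom.congr_fun hid c
    have hσc' c : σ.symm c = c := σ.symm_apply_eq.2 (hσc c).symm
    exact Or.inl ⟨by simpa [hσc'] using hγmem, by simpa [hσc] using hδmem,
      fun f w => by rw [hδ, hσc]⟩
  · have hσc c : σ c = starRingEnd ℂ c := RingHom.congr_fun hconj c
    have hσc' c : σ.symm c = starRingEnd ℂ c := σ.symm_apply_eq.2 (by rw [hσc, conj_conj])
    exact Or.inr ⟨by simpa [hσc'] using hγmem, by simpa [hσc] using hδmem,
      fun f w => by rw [hδ, hσc]⟩
end
end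

section
/- Let (R_n)_{n < κ} with κ ≤ ℵ₀ be a countable family of Polish rings with unity, each of which is algebraically determined, and let R = ∏_{n < κ} R_n with the product topology and coordinatewise ring operations. Then R is an algebraically determined Polish ring. -/
/-!
For each coordinate `i`, the corner ring `e S e` of the idempotent `e = φ⁻¹ (Pi.single i 1)` is
closed in `S`, hence Polish, and `φ` maps it isomorphically onto `R i`. As `R i` is algebraically
determined, `x ↦ φ x i`, which factors through `x ↦ e x e`, is continuous, so `φ` is continuous.
The continuity of `φ⁻¹` is then the automatic continuity of Borel isomorphisms between Polish
groups: a continuous bijective homomorphism maps a closed identity neighbourhood `V` onto a Borel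
set (Lusin–Souslin) which is non-meagre, since countably many translates of it cover the target,
and Pettis' theorem makes `φ V / φ V` a neighbourhood of the identity.
-/

open Topology Set Filter Pointwise

theorem IsIdempotentElem.pi_single {ι : Type*} [DecidableEq ι] {R : ι → Type*}
    [∀ i, MulZeroClass (R i)] (i : ι) {r : R i} (hr : IsIdempotentElem r) :
    IsIdempotentElem (Pi.single i r : ∀ j, R j) := by
  rw [IsIdempotentElem, ← Pi.single_mul, hr.eq]

theorem Subsemigroup.map_mem_corner {R S F : Type*} [Semigroup R] [Semigroup S] [FunLike F R S]
    [MulHomClass F R S] (f : F) {e x : R} (hx : x ∈ corner e) : f x ∈ corner (f e) := by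
  obtain ⟨r, rfl⟩ := hx
  exact ⟨f r, by simp only [map_mul]⟩

@[simps]
def IsIdempotentElem.toCorner {R : Type*} [Semigroup R] {e : R} (he : IsIdempotentElem e) (r : R) :
    he.Corner :=
  ⟨e * r * e, r, rfl⟩

@[simps]
def RingEquiv.cornerCongr {R S : Type*} [Ring R] [Ring S] (f : R ≃+* S) {e : R} {e' : S}
    (he : IsIdempotentElem e) (he' : IsIdempotentElem e') (h : f e = e') :
    he.Corner ≃+* he'.Corner where
  toFun x := ⟨f x.1, h ▸ Subsemigroup.map_mem_corner f x.2⟩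
  invFun y := ⟨f.symm y.1, f.symm_apply_eq.2 h.symm ▸ Subsemigroup.map_mem_corner f.symm y.2⟩
  left_inv x := Subtype.ext (f.symm_apply_apply x.1)
  right_inv y := Subtype.ext (f.apply_symm_apply y.1)
  map_mul' x y := Subtype.ext (map_mul f x.1 y.1)
  map_add' x y := Subtype.ext (map_add f x.1 y.1)

@[simps]
def Pi.cornerSingleOneEquiv {ι : Type*} [DecidableEq ι] {R : ι → Type*} [∀ i, Ring (R i)]
    (i : ι) :
    (IsIdempotentElem.one.pi_single i : IsIdempotentElem (Pi.single i 1 : ∀ j, R j)).Corner ≃+*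
      R i where
  toFun x := x.1 i
  invFun r := ⟨Pi.single i r, Pi.single i r, by simp [← Pi.single_mul]⟩
  left_inv := by
    rintro ⟨_, r, rfl⟩
    refine Subtype.ext (funext fun j => ?_)
    rcases eq_or_ne j i with rfl | hj <;> simp [*]
  right_inv r := Pi.single_eq_same i r
  map_mul' _ _ := rfl
  map_add' _ _ := rfl

namespace IsIdempotentElem

variable {R : Type*} [TopologicalSpace R] {e : R}

instance [Semigroup R] (he : IsIdempotentElem e) : TopologicalSpace he.Corner :=
  inferInstanceAs (TopologicalSpace (Subsemigroup.corner e))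

variable [Ring R] [IsTopologicalRing R]

instance (he : IsIdempotentElem e) : IsTopologicalRing he.Corner where
  continuous_add := continuous_induced_rng.2 <|
    (continuous_subtype_val.comp continuous_fst).add (continuous_subtype_val.comp continuous_snd)
  continuous_mul := continuous_induced_rng.2 <|
    (continuous_subtype_val.comp continuous_fst).mul (continuous_subtype_val.comp continuous_snd)
  continuous_neg := continuous_induced_rng.2 continuous_subtype_val.neg

theorem isClosed_corner [T2Space R] (he : IsIdempotentElem e) :
    IsClosed (Subsemigroup.corner e : Set R) := by
  have : (Subsemigroup.corner e : Set R) = {r | e * r = r} ∩ {r | r * e = r} :=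
    Set.ext fun r => Subsemigroup.mem_corner_iff he
  rw [this]
  exact (isClosed_eq (continuous_const_mul e) continuous_id).inter
    (isClosed_eq (continuous_mul_const e) continuous_id)

instance [PolishSpace R] (he : IsIdempotentElem e) : PolishSpace he.Corner :=
  he.isClosed_corner.polishSpace

theorem continuous_toCorner (he : IsIdempotentElem e) : Continuous he.toCorner :=
  continuous_induced_rng.2 <| (continuous_const_mul e).mul continuous_const

end IsIdempotentElem

section AutomaticContinuity

variable {G H : Type*} [TopologicalSpace G] [Group G] [IsTopologicalGroup G]
  [TopologicalSpace H] [Group H] [IsTopologicalGroup H]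

@[to_additive]
theorem IsMeagre.smul_set {A : Set H} (hA : IsMeagre A) (g : H) : IsMeagre (g • A) := by
  rw [← preimage_smul_inv]
  exact hA.preimage_of_isOpenMap (continuous_const_smul _) (isOpenMap_smul _)

@[to_additive]
theorem div_mem_nhds_one_of_baireMeasurableSet [BaireSpace H] {A : Set H}
    (hA : BaireMeasurableSet A) (hA' : ¬ IsMeagre A) : A / A ∈ 𝓝 1 := by
  obtain ⟨U, hUo, hAU⟩ := hA.residualEq_isOpen
  replace hAU : ∀ᶠ x in residual H, x ∈ A ↔ x ∈ U := hAU.mem_iff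
  obtain ⟨u, hu⟩ : U.Nonempty := by
    by_contra! hU
    exact hA' <| hAU.mono fun x hx hxA => by simpa [hU] using hx.mp hxA
  refine mem_of_superset ((hUo.div_left (s := U)).mem_nhds
    (one_mem_div_iff.2 (not_disjoint_iff.2 ⟨u, hu, hu⟩))) ?_
  rintro _ ⟨u₁, hu₁, u₂, hu₂, rfl⟩
  set g := u₁ / u₂
  have hW : ∃ᶠ x in residual H, x ∈ U ∩ (g * ·) ⁻¹' U :=
    not_isMeagre_of_isOpen (hUo.inter (hUo.preimage (continuous_const_mul g)))
      ⟨u₂, hu₂, by simpa [g] using hu₁⟩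
  obtain ⟨x, ⟨hxU, hgxU⟩, hxA, hgxA⟩ := (hW.and_eventually
    (hAU.and ((tendsto_residual_of_isOpenMap (continuous_const_mul g)
      (isOpenMap_mul_left g)).eventually hAU))).exists
  exact ⟨g * x, hgxA.mpr hgxU, x, hxA.mpr hxU, mul_div_cancel_right g x⟩

@[to_additive]
theorem MonoidHom.not_isMeagre_image_of_mem_nhds_one [SecondCountableTopology G] [BaireSpace H]
    (f : G →* H) (hf : Function.Surjective f) {V : Set G} (hV : V ∈ 𝓝 1) :
    ¬ IsMeagre (f '' V) := by
  obtain ⟨s, hs, hcover⟩ := TopologicalSpace.countable_cover_nhds (f := fun g : G => g • V)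
    fun g => by simpa using smul_mem_nhds_smul g hV
  intro hmeagre
  have huniv : IsMeagre (univ : Set H) := by
    have : (univ : Set H) = ⋃ g ∈ s, f g • f '' V := by
      rw [← image_univ_of_surjective hf, ← hcover, image_iUnion₂]
      simp_rw [image_smul_distrib]
    rw [this]
    exact isMeagre_biUnion hs fun g _ => hmeagre.smul_set (f g)
  exact not_isMeagre_of_isOpen isOpen_univ univ_nonempty huniv

@[to_additive]
theorem MulEquiv.continuous_symm_of_continuous [PolishSpace G] [T2Space H] [BaireSpace H]
    (f : G ≃* H) (hf : Continuous f) : Continuous f.symm := by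
  borelize G H
  refine continuous_of_continuousAt_one f.symm fun U hU => ?_
  rw [map_one] at hU
  obtain ⟨V, hV, hVc, hVinv, hVU⟩ := exists_closed_nhds_one_inv_eq_mul_subset hU
  have hmeas : BaireMeasurableSet (f '' V) :=
    ((hf.measurableEmbedding f.injective).measurableSet_image' hVc.measurableSet).baireMeasurableSet
  have hnm := (f : G →* H).not_isMeagre_image_of_mem_nhds_one f.surjective hV
  refine mem_map.2 <| mem_of_superset (div_mem_nhds_one_of_baireMeasurableSet hmeas hnm) ?_
  rw [← image_div, div_eq_mul_inv, hVinv, image_subset_iff]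
  exact fun v hv => by simpa using hVU hv

end AutomaticContinuity

def IsAlgebraicallyDetermined (R : Type*) [TopologicalSpace R] [Ring R] : Prop :=
  ∀ (S : Type) [TopologicalSpace S] [Ring S] [IsTopologicalRing S] [PolishSpace S]
    (φ : S ≃+* R), Continuous φ ∧ Continuous φ.symm

section Pi

variable {ι : Type*} {R : ι → Type*} [∀ i, TopologicalSpace (R i)] [∀ i, Ring (R i)]

theorem RingEquiv.continuous_apply_of_isAlgebraicallyDetermined [DecidableEq ι]
    (hdet : ∀ i, IsAlgebraicallyDetermined (R i)) {S : Type} [TopologicalSpace S] [Ring S]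
    [IsTopologicalRing S] [PolishSpace S] (φ : S ≃+* ∀ i, R i) (i : ι) :
    Continuous fun x => φ x i := by
  have he : IsIdempotentElem (φ.symm (Pi.single i 1)) := (IsIdempotentElem.one.pi_single i).map _
  let ψ := (φ.cornerCongr he _ (φ.apply_symm_apply _)).trans (Pi.cornerSingleOneEquiv i)
  have hψ : (fun x => φ x i) = ψ ∘ he.toCorner := funext fun x => by simp [ψ]
  exact hψ ▸ (hdet i _ ψ).1.comp he.continuous_toCorner

theorem IsAlgebraicallyDetermined.pi [Countable ι] [∀ i, IsTopologicalRing (R i)]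
    [∀ i, PolishSpace (R i)] (hdet : ∀ i, IsAlgebraicallyDetermined (R i)) :
    IsAlgebraicallyDetermined (∀ i, R i) := by
  intro S _ _ _ _ φ
  classical
  have hφ : Continuous φ := continuous_pi (φ.continuous_apply_of_isAlgebraicallyDetermined hdet)
  exact ⟨hφ, φ.toAddEquiv.continuous_symm_of_continuous hφ⟩

end Pi

/-- a countable product of algebraically determined Polish rings with unity
is an algebraically determined Polish ring. -/
theorem stmt3 (ι : Type) [Countable ι]
    (R : ι → Type) [∀ i, TopologicalSpace (R i)] [∀ i, Ring (R i)]
    [∀ i, IsTopologicalRing (R i)] [∀ i, PolishSpace (R i)]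
    (hdet : ∀ i, ∀ (S : Type) [TopologicalSpace S] [Ring S] [IsTopologicalRing S]
      [PolishSpace S], ∀ φ : S ≃+* R i, Continuous ⇑φ ∧ Continuous ⇑φ.symm)
    (S : Type) [TopologicalSpace S] [Ring S] [IsTopologicalRing S] [PolishSpace S]
    (φ : S ≃+* (∀ i, R i)) :
    Continuous ⇑φ ∧ Continuous ⇑φ.symm :=
  IsAlgebraicallyDetermined.pi hdet S φ
end

section
/- There is no Polish topology on the ring B(𝔻) of bounded analytic functions on the open unit disk which makes it a topological ring: if τ is a topology on B(𝔻) that is separable and completely metrizable and for which addition and multiplication are continuous, a contradiction follows. -/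
open Complex
open scoped Classical

noncomputable section

/-- The open unit disk. -/
def unitDisk : Set ℂ := {z : ℂ | ‖z‖ < 1}

/-- The ring `B(D)` of bounded analytic functions on the open unit disk. -/
def boundedAnalytic : Subalgebra ℂ (↥unitDisk → ℂ) where
  carrier := {f | f ∈ analyticAlg unitDisk ∧ ∃ C : ℝ, ∀ z, ‖f z‖ ≤ C}
  add_mem' := by
    rintro f g ⟨hf, C, hC⟩ ⟨hg, C', hC'⟩
    refine ⟨add_mem hf hg, C + C', fun z => ?_⟩
    show ‖f z + g z‖ ≤ C + C'
    exact le_trans (norm_add_le _ _) (add_le_add (hC z) (hC' z))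
  mul_mem' := by
    rintro f g ⟨hf, C, hC⟩ ⟨hg, C', hC'⟩
    refine ⟨mul_mem hf hg, max C 0 * max C' 0, fun z => ?_⟩
    show ‖f z * g z‖ ≤ max C 0 * max C' 0
    rw [norm_mul]
    exact mul_le_mul (le_trans (hC z) (le_max_left _ _))
      (le_trans (hC' z) (le_max_left _ _)) (norm_nonneg _) (le_max_right _ _)
  algebraMap_mem' := fun r =>
    ⟨(analyticAlg unitDisk).algebraMap_mem r, ‖r‖, fun _ => by simp⟩

/-! Suppose `τ` were such a topology. Fix a countable dense `Q ⊆ ℂ` and let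
`Cₙ = {f | σ(f) ∩ Q ⊆ closedBall 0 n}`. The units of a Polish ring form the injective continuous
image of the closed set `{(f, g) | f g = 1}`, so each `Cₙ` is Borel, and the `Cₙ` cover `B(𝔻)`
because bounded functions have bounded spectrum. By Baire's theorem some `Cₙ` is nonmeagre, so by
Pettis' theorem `Cₙ - Cₙ` is a neighbourhood of `0`, and countably many translates of it cover
`B(𝔻)`. By the open mapping theorem a nonconstant `f ∈ Cₙ` satisfies `|f| ≤ n`, so members of
`Cₙ` oscillate by at most `2n` on `𝔻`, and two functions in one translate of `Cₙ - Cₙ` differ by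
a function oscillating by at most `8n`. The multiples `(8n + 1) exp (s (w + 1) / (w - 1))`,
`s > 0`, of the singular inner functions form an uncountable family violating this. -/

open Set Filter Topology Pointwise Metric

section TopologicalAddGroup

variable {X : Type*} [TopologicalSpace X]

theorem exists_not_isMeagre_of_iUnion_eq_univ [BaireSpace X] [Nonempty X] {ι : Type*}
    [Countable ι] {C : ι → Set X} (hC : ⋃ i, C i = univ) : ∃ i, ¬IsMeagre (C i) := by
  by_contra! h
  have := isMeagre_iUnion h
  rw [hC] at this
  exact not_isMeagre_of_isOpen isOpen_univ univ_nonempty this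

variable [AddCommGroup X] [IsTopologicalAddGroup X]

theorem BaireMeasurableSet.sub_mem_nhds_zero [BaireSpace X] {S : Set X}
    (hS : BaireMeasurableSet S) (hS' : ¬IsMeagre S) : S - S ∈ 𝓝 0 := by
  obtain ⟨U, hUo, hSU⟩ := hS.residualEq_isOpen
  obtain ⟨u, hu⟩ : U.Nonempty := by
    by_contra! hU
    exact hS' (eventuallyEq_empty.1 (hU ▸ hSU))
  refine mem_of_superset ((hUo.sub_left (t := U)).mem_nhds ⟨u, hu, u, hu, sub_self u⟩) ?_
  rintro _ ⟨u₁, hu₁, u₂, hu₂, rfl⟩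
  set g := u₁ - u₂
  have hW : ∃ᶠ x in residual X, x ∈ U ∧ x - g ∈ U := by
    exact not_isMeagre_of_isOpen (hUo.inter (hUo.preimage (continuous_sub_right g)))
      ⟨u₁, hu₁, by simpa [g] using hu₂⟩
  have hSU' : ∀ᶠ x in residual X, x - g ∈ S ↔ x - g ∈ U :=
    hSU.mem_iff.filter_mono (tendsto_residual_of_isOpenMap (continuous_sub_right g)
      (Homeomorph.subRight g).isOpenMap)
  obtain ⟨x, ⟨hxU, hxgU⟩, hx, hxg⟩ := (hW.and_eventually (hSU.mem_iff.and hSU')).exists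
  exact ⟨x, hx.2 hxU, x - g, hxg.2 hxgU, sub_sub_cancel x g⟩

theorem exists_countable_forall_sub_mem [TopologicalSpace.SeparableSpace X] {V : Set X}
    (hV : V ∈ 𝓝 0) : ∃ D : Set X, D.Countable ∧ ∀ f, ∃ d ∈ D, f - d ∈ V := by
  obtain ⟨D, hDc, hD⟩ := TopologicalSpace.exists_countable_dense X
  refine ⟨D, hDc, fun f => ?_⟩
  have : {d | f - d ∈ V} ∈ 𝓝 f :=
    ((continuous_const.sub continuous_id).tendsto' f 0 (sub_self f)) hV
  obtain ⟨d, hdV, hdD⟩ := mem_closure_iff_nhds.1 (hD f) _ this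
  exact ⟨d, hdD, hdV⟩

end TopologicalAddGroup

theorem countable_of_forall_sub_mem {X ι : Type*} [AddCommGroup X] {S D : Set X}
    (hD : D.Countable) (hcover : ∀ f, ∃ d ∈ D, f - d ∈ S) (F : ι → X)
    (hF : Pairwise fun i j => F i - F j ∉ S - S) : Countable ι := by
  choose d hdD hdS using fun i => hcover (F i)
  have : Countable D := hD.to_subtype
  refine Function.Injective.countable (f := fun i => (⟨d i, hdD i⟩ : D)) fun i j hij => ?_
  by_contra hne
  refine hF hne ⟨F i - d i, hdS i, F j - d j, hdS j, ?_⟩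
  simp only [Subtype.mk.injEq] at hij
  change F i - d i - (F j - d j) = F i - F j
  rw [hij, sub_sub_sub_cancel_right]

theorem baireMeasurableSet_setOf_isUnit {R : Type*} [CommMonoid R] [TopologicalSpace R]
    [PolishSpace R] [ContinuousMul R] : BaireMeasurableSet {f : R | IsUnit f} := by
  borelize R
  have hinj : InjOn Prod.fst {p : R × R | p.1 * p.2 = 1} := fun p hp q hq h =>
    Prod.ext h (left_inv_eq_right_inv (by rw [mul_comm, ← h]; exact hp) hq)
  have : {f : R | IsUnit f} = Prod.fst '' {p : R × R | p.1 * p.2 = 1} := by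
    ext f
    simp [isUnit_iff_exists_inv]
  rw [this]
  exact ((isClosed_eq continuous_mul continuous_const).measurableSet_image_of_continuousOn_injOn
    continuous_fst.continuousOn hinj).baireMeasurableSet

theorem baireMeasurableSet_setOf_spectrum_inter_subset {𝕜 A : Type*} [CommRing 𝕜] [CommRing A]
    [Algebra 𝕜 A] [TopologicalSpace A] [PolishSpace A] [IsTopologicalRing A] {Q : Set 𝕜}
    (hQ : Q.Countable) (K : Set 𝕜) : BaireMeasurableSet {a : A | spectrum 𝕜 a ∩ Q ⊆ K} := by
  have : {a : A | spectrum 𝕜 a ∩ Q ⊆ K} =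
      ⋂ c ∈ Q \ K, (algebraMap 𝕜 A c - ·) ⁻¹' {u | IsUnit u} := by
    ext a
    simp only [Set.mem_ofPred_eq, subset_def, mem_inter_iff, spectrum.mem_iff, mem_iInter,
      Set.mem_sdiff, mem_preimage]
    grind
  rw [this]
  exact .biInter (hQ.mono sdiff_subset) fun c _ => baireMeasurableSet_setOf_isUnit.preimage
    (Homeomorph.subLeft _).continuous (Homeomorph.subLeft _).isOpenMap

theorem unitDisk_eq_ball : unitDisk = ball 0 1 := by
  ext; simp [unitDisk]

theorem isOpen_unitDisk : IsOpen unitDisk :=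
  unitDisk_eq_ball ▸ isOpen_ball

theorem isPreconnected_unitDisk : IsPreconnected unitDisk :=
  unitDisk_eq_ball ▸ (convex_ball 0 1).isPreconnected

def cayley (w : ℂ) : ℂ := (w + 1) / (w - 1)

theorem cayley_cayley {ω : ℂ} (hω : ω ≠ 1) : cayley (cayley ω) = ω := by
  have : ω - 1 ≠ 0 := sub_ne_zero.2 hω
  simp only [cayley]
  field_simp
  ring

theorem re_cayley_nonpos {w : ℂ} (hw : w ∈ unitDisk) : (cayley w).re ≤ 0 := by
  have hw' : w.re ^ 2 + w.im ^ 2 < 1 := by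
    have : ‖w‖ ^ 2 < 1 := by nlinarith [norm_nonneg w, show ‖w‖ < 1 from hw]
    rwa [← normSq_eq_norm_sq, normSq_apply, ← sq, ← sq] at this
  rw [cayley, div_re, ← add_div]
  refine div_nonpos_of_nonpos_of_nonneg ?_ (normSq_nonneg _)
  simp only [add_re, sub_re, add_im, sub_im, one_re, one_im]
  nlinarith

theorem cayley_mem_unitDisk {ω : ℂ} (hω : ω.re < 0) : cayley ω ∈ unitDisk := by
  have hne : ω - 1 ≠ 0 := fun h => by norm_num [sub_eq_zero.1 h] at hω
  show ‖(ω + 1) / (ω - 1)‖ < 1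
  rw [norm_div, div_lt_one (norm_pos_iff.2 hne), ← sq_lt_sq₀ (norm_nonneg _) (norm_nonneg _),
    ← normSq_eq_norm_sq, ← normSq_eq_norm_sq, normSq_apply, normSq_apply]
  simp only [add_re, sub_re, add_im, sub_im, one_re, one_im]
  nlinarith

theorem differentiableOn_cayley : DifferentiableOn ℂ cayley unitDisk :=
  ((differentiable_id.add_const 1).differentiableOn).div
    ((differentiable_id.sub_const 1).differentiableOn)
    fun w hw h => by simp [unitDisk, sub_eq_zero.1 h] at hw

theorem exists_one_le_norm_exp_sub {a b : ℝ} (ha : 0 ≤ a) (hab : a < b) :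
    ∃ ω₁ ω₂ : ℂ, ω₁.re < 0 ∧ ω₂.re < 0 ∧
      1 ≤ ‖(exp (a * ω₁) - exp (b * ω₁)) - (exp (a * ω₂) - exp (b * ω₂))‖ := by
  have hb : 0 < b := ha.trans_lt hab
  set δ := Real.log 2 / b
  have hδ : 0 < δ := div_pos (Real.log_pos one_lt_two) hb
  have hbδ : Real.exp (-(b * δ)) = 1 / 2 := by
    rw [mul_div_cancel₀ _ hb.ne', Real.exp_neg, Real.exp_log two_pos, one_div]
  set x := Real.exp (-(a * δ))
  have hx : 1 / 2 ≤ x := by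
    rw [← hbδ]
    exact Real.exp_le_exp.2 (neg_le_neg (mul_le_mul_of_nonneg_right hab.le hδ.le))
  -- shifting `ω₁` by `π / (b - a) * I` flips the relative sign of `exp (a ω)` and `exp (b ω)`
  set y := Real.pi / (b - a)
  set ω₁ : ℂ := ((-δ : ℝ) : ℂ)
  have hω₁ : ω₁.re < 0 := by simpa [ω₁] using hδ
  refine ⟨ω₁, ω₁ + y * I, hω₁, by simpa using hω₁, ?_⟩
  set e := exp (a * y * I)
  have he : ‖e‖ = 1 := by simpa [e] using norm_exp_ofReal_mul_I (a * y)
  have ha₂ : exp (a * (ω₁ + y * I)) = exp (a * ω₁) * e := by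
    rw [← exp_add]; ring_nf
  have hb₂ : exp (b * (ω₁ + y * I)) = -(exp (b * ω₁) * e) := by
    have : (b : ℂ) * (ω₁ + y * I) = b * ω₁ + a * y * I + Real.pi * I := by
      have : (b - a) * y = Real.pi := mul_div_cancel₀ _ (sub_ne_zero.2 hab.ne')
      push_cast [← this]
      ring
    rw [this, exp_add, exp_add, exp_pi_mul_I]
    ring
  have hexp : ∀ c : ℝ, exp (c * ω₁) = (Real.exp (-(c * δ)) : ℂ) := fun c => by
    rw [ofReal_exp]; push_cast [ω₁]; ring_nf
  have hnorm_sub : ‖exp (a * ω₁) - exp (b * ω₁)‖ = x - 1 / 2 := by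
    rw [hexp, hexp, hbδ, ← ofReal_sub, norm_real, Real.norm_of_nonneg (by linarith)]
  have hnorm_add : ‖e * (exp (a * ω₁) + exp (b * ω₁))‖ = x + 1 / 2 := by
    rw [norm_mul, he, one_mul, hexp, hexp, hbδ, ← ofReal_add, norm_real,
      Real.norm_of_nonneg (by positivity)]
  calc (1 : ℝ) = ‖e * (exp (a * ω₁) + exp (b * ω₁))‖ - ‖exp (a * ω₁) - exp (b * ω₁)‖ := by
        rw [hnorm_sub, hnorm_add]; ring
    _ ≤ ‖e * (exp (a * ω₁) + exp (b * ω₁)) - (exp (a * ω₁) - exp (b * ω₁))‖ :=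
        norm_sub_norm_le _ _
    _ = _ := by rw [ha₂, hb₂, ← norm_neg]; ring_nf

instance : CoeFun boundedAnalytic (fun _ => unitDisk → ℂ) := ⟨Subtype.val⟩

namespace boundedAnalytic

theorem exists_differentiableOn (f : boundedAnalytic) :
    ∃ F : ℂ → ℂ, DifferentiableOn ℂ F unitDisk ∧ ∀ z : unitDisk, F z = f z :=
  f.2.1

theorem exists_norm_le (f : boundedAnalytic) : ∃ C, ∀ z, ‖f z‖ ≤ C :=
  f.2.2

theorem isUnit_of_le_norm (f : boundedAnalytic) {ε : ℝ} (hε : 0 < ε) (h : ∀ z, ε ≤ ‖f z‖) :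
    IsUnit f := by
  have hf0 : ∀ z, f z ≠ 0 := fun z h0 => by linarith [h z, norm_eq_zero.2 h0]
  obtain ⟨F, hF, hFf⟩ := exists_differentiableOn f
  have hF0 : ∀ w ∈ unitDisk, F w ≠ 0 := fun w hw => hFf ⟨w, hw⟩ ▸ hf0 ⟨w, hw⟩
  let g : boundedAnalytic := ⟨fun z => (f z)⁻¹, ⟨F⁻¹, hF.inv hF0, fun z => by simp [hFf]⟩,
    ε⁻¹, fun z => by rw [norm_inv]; exact inv_anti₀ hε (h z)⟩
  exact IsUnit.of_mul_eq_one (a := f) g (Subtype.ext (funext fun z => mul_inv_cancel₀ (hf0 z)))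

theorem apply_mem_spectrum (f : boundedAnalytic) (z : unitDisk) : f z ∈ spectrum ℂ f :=
  AlgHom.apply_mem_spectrum ((Pi.evalAlgHom ℂ (fun _ => ℂ) z).comp boundedAnalytic.val) f

theorem spectrum_subset_closedBall {f : boundedAnalytic} {C : ℝ} (hC : ∀ z, ‖f z‖ ≤ C) :
    spectrum ℂ f ⊆ closedBall 0 C := by
  intro c hc
  by_contra hlt
  rw [mem_closedBall_zero_iff, not_le] at hlt
  refine spectrum.mem_iff.1 hc (isUnit_of_le_norm _ (sub_pos.2 hlt) fun z => ?_)
  calc ‖c‖ - C ≤ ‖c‖ - ‖f z‖ := by linarith [hC z]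
    _ ≤ ‖c - f z‖ := norm_sub_norm_le _ _
    _ = ‖(algebraMap ℂ boundedAnalytic c - f) z‖ := by simp

theorem exists_nat_spectrum_subset (f : boundedAnalytic) :
    ∃ n : ℕ, spectrum ℂ f ⊆ closedBall 0 n := by
  obtain ⟨C, hC⟩ := exists_norm_le f
  obtain ⟨n, hn⟩ := exists_nat_ge C
  exact ⟨n, (spectrum_subset_closedBall hC).trans (closedBall_subset_closedBall hn)⟩

theorem eq_const_or_isOpen_range (f : boundedAnalytic) :
    (∃ c, ∀ z, f z = c) ∨ IsOpen (range f) := by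
  obtain ⟨F, hF, hFf⟩ := exists_differentiableOn f
  have hrange : range f = F '' unitDisk := by
    ext c
    simp [← hFf]
  rcases (hF.analyticOnNhd isOpen_unitDisk).is_constant_or_isOpen isPreconnected_unitDisk
    with ⟨c, hc⟩ | hopen
  · exact .inl ⟨c, fun z => hFf z ▸ hc z z.2⟩
  · exact .inr (hrange ▸ hopen _ subset_rfl isOpen_unitDisk)

theorem norm_sub_le_of_spectrum_inter_subset {Q : Set ℂ} (hQ : Dense Q) {f : boundedAnalytic}
    {r : ℝ} (hr : 0 ≤ r) (hf : spectrum ℂ f ∩ Q ⊆ closedBall 0 r) (z w : unitDisk) :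
    ‖f z - f w‖ ≤ 2 * r := by
  rcases eq_const_or_isOpen_range f with ⟨c, hc⟩ | hopen
  · rw [hc, hc, sub_self, norm_zero]
    positivity
  -- the open range lies in the closure of its points in `Q`, which are in the spectrum
  have hrange : range f ⊆ closedBall 0 r :=
    (hQ.open_subset_closure_inter hopen).trans <| closure_minimal
      ((inter_subset_inter_left _ (range_subset_iff.2 (apply_mem_spectrum f))).trans hf)
      isClosed_closedBall
  have hle : ∀ z, ‖f z‖ ≤ r := fun z => mem_closedBall_zero_iff.1 (hrange (mem_range_self z))
  linarith [norm_sub_le (f z) (f w), hle z, hle w]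

theorem norm_sub_le_of_mem_sub {S : Set boundedAnalytic} {r : ℝ}
    (hS : ∀ f ∈ S, ∀ z w, ‖f z - f w‖ ≤ r) : ∀ f ∈ S - S, ∀ z w, ‖f z - f w‖ ≤ 2 * r := by
  rintro _ ⟨f, hf, g, hg, rfl⟩ z w
  calc ‖(f - g) z - (f - g) w‖ = ‖(f z - f w) - (g z - g w)‖ := by
        simp only [Subalgebra.coe_sub, Pi.sub_apply]; ring_nf
    _ ≤ r + r := (norm_sub_le _ _).trans (add_le_add (hS f hf z w) (hS g hg z w))
    _ = 2 * r := by ring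

-- the singular inner function of the point mass `Real.exp t` at `1`
def singularInner (t : ℝ) : boundedAnalytic :=
  ⟨fun z => exp (Real.exp t * cayley z),
    ⟨fun w => exp (Real.exp t * cayley w),
      (differentiableOn_cayley.const_mul _).cexp, fun _ => rfl⟩,
    1, fun z => by
      rw [norm_exp, re_ofReal_mul, Real.exp_le_one_iff]
      exact mul_nonpos_of_nonneg_of_nonpos (Real.exp_pos t).le (re_cayley_nonpos z.2)⟩

theorem singularInner_apply (t : ℝ) (z : unitDisk) :
    singularInner t z = exp (Real.exp t * cayley z) := rfl

theorem exists_one_le_norm_sub_singularInner {s t : ℝ} (hst : s ≠ t) :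
    ∃ z w : unitDisk, 1 ≤ ‖(singularInner s - singularInner t) z
      - (singularInner s - singularInner t) w‖ := by
  wlog hlt : s < t generalizing s t
  · obtain ⟨z, w, h⟩ := this hst.symm (hst.lt_or_gt.resolve_left hlt)
    refine ⟨z, w, h.trans_eq ?_⟩
    rw [← norm_neg]
    simp only [Subalgebra.coe_sub, Pi.sub_apply]
    ring_nf
  obtain ⟨ω₁, ω₂, h₁, h₂, hle⟩ :=
    exists_one_le_norm_exp_sub (Real.exp_pos s).le (Real.exp_lt_exp.2 hlt)
  have hne : ∀ ω : ℂ, ω.re < 0 → ω ≠ 1 := fun ω h h1 => by norm_num [h1] at h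
  refine ⟨⟨cayley ω₁, cayley_mem_unitDisk h₁⟩, ⟨cayley ω₂, cayley_mem_unitDisk h₂⟩, ?_⟩
  simpa [singularInner_apply, cayley_cayley (hne _ h₁), cayley_cayley (hne _ h₂)] using hle

end boundedAnalytic

/-- there is no Polish topology on the ring of bounded analytic functions on
the open unit disk making addition and multiplication continuous. -/
theorem stmt4 (τ : TopologicalSpace ↥boundedAnalytic)
    (hp : @PolishSpace ↥boundedAnalytic τ)
    (hadd : @Continuous (↥boundedAnalytic × ↥boundedAnalytic) ↥boundedAnalytic
      (@instTopologicalSpaceProd _ _ τ τ) τ (fun p => p.1 + p.2))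
    (hmul : @Continuous (↥boundedAnalytic × ↥boundedAnalytic) ↥boundedAnalytic
      (@instTopologicalSpaceProd _ _ τ τ) τ (fun p => p.1 * p.2)) :
    False := by
  let _ : TopologicalSpace boundedAnalytic := τ
  have : IsTopologicalRing boundedAnalytic :=
    IsTopologicalSemiring.toIsTopologicalRing { continuous_add := hadd, continuous_mul := hmul }
  obtain ⟨Q, hQc, hQd⟩ := TopologicalSpace.exists_countable_dense ℂ
  set C : ℕ → Set boundedAnalytic := fun n => {f | spectrum ℂ f ∩ Q ⊆ closedBall 0 n}
  have hcover : ⋃ n, C n = univ := eq_univ_of_forall fun f => mem_iUnion.2 <|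
    (boundedAnalytic.exists_nat_spectrum_subset f).imp fun _ h => inter_subset_left.trans h
  obtain ⟨n, hn⟩ := exists_not_isMeagre_of_iUnion_eq_univ hcover
  obtain ⟨D, hD, hDcover⟩ := exists_countable_forall_sub_mem
    ((baireMeasurableSet_setOf_spectrum_inter_subset hQc _).sub_mem_nhds_zero hn)
  have hosc : ∀ f ∈ (C n - C n) - (C n - C n), ∀ z w, ‖f z - f w‖ ≤ 2 * (2 * (2 * n)) :=
    boundedAnalytic.norm_sub_le_of_mem_sub <| boundedAnalytic.norm_sub_le_of_mem_sub
      fun f hf => boundedAnalytic.norm_sub_le_of_spectrum_inter_subset hQd n.cast_nonneg hf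
  refine not_countable (α := ℝ) <| countable_of_forall_sub_mem hD hDcover
    (fun t => ((8 * n + 1 : ℝ) : ℂ) • boundedAnalytic.singularInner t) fun s t hst hmem => ?_
  obtain ⟨z, w, hzw⟩ := boundedAnalytic.exists_one_le_norm_sub_singularInner hst
  have := hosc _ hmem z w
  rw [← smul_sub] at this
  simp only [Subalgebra.coe_smul, Pi.smul_apply, smul_eq_mul, ← mul_sub, norm_mul, norm_real,
    Real.norm_of_nonneg (by positivity : (0 : ℝ) ≤ 8 * n + 1)] at this
  nlinarith
end
end

section
/- Let Ω₁ ⊆ ℂ be nonempty open and connected, Ω₂ ⊆ ℂ open, and let γ : Ω₁ → Ω₂ be a conformal bijection. Then the map φ : 𝒜(Ω₁) → 𝒜(Ω₂) defined by φ(f) = (f ∘ γ⁻¹)/(γ⁻¹)′ is well-defined ((γ⁻¹)′ is zero-free on Ω₂) and is an isomorphism of Lie rings: it is an additive bijection with φ([f,g]) = [φ(f),φ(g)] for all f, g ∈ 𝒜(Ω₁). -/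
/-!
Write `δ = γ⁻¹`. The map `f ↦ (f ∘ δ) / δ'` is the pullback along `δ` of the vector field
`f ∂_z`, and in one complex variable `f g' - f' g` is the Lie bracket of the vector fields
`f ∂_z` and `g ∂_z`. Pullback along a `C²` map commutes with Lie brackets
(`VectorField.pullback_lieBracket`), which gives the bracket identity. The chain rule for
`γ ∘ δ = id` gives `γ'(δ w) δ'(w) = 1`, so `δ'` is zero-free and pulling back along `γ` undoes
pulling back along `δ`.
-/

open Complex
open scoped Classical

noncomputable section

/-- Extension of a function on `Omega` to the whole plane by zero. -/
def extFun (Ω : Set ℂ) (f : Ω → ℂ) : ℂ → ℂ :=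
  fun z => if h : z ∈ Ω then f ⟨z, h⟩ else 0

/-- The complex derivative of an analytic function on `Omega`. -/
def derivΩ (Ω : Set ℂ) (f : Ω → ℂ) : Ω → ℂ :=
  fun z => deriv (extFun Ω f) z

lemma derivΩ_mem {Ω : Set ℂ} (hΩ : IsOpen Ω) {f : Ω → ℂ}
    (hf : f ∈ analyticAlg Ω) : derivΩ Ω f ∈ analyticAlg Ω := by
  obtain ⟨F, hF, hFf⟩ := hf
  refine ⟨deriv F, ((hF.analyticOnNhd hΩ).deriv).differentiableOn, fun z => ?_⟩
  have hev : extFun Ω f =ᶠ[nhds (z : ℂ)] F := by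
    filter_upwards [hΩ.mem_nhds z.2] with w hw
    simp [extFun, hw, hFf ⟨w, hw⟩]
  exact (hev.deriv_eq).symm

/-- The Lie bracket `[f, g] = f * g' - f' * g` on `A(Omega)`. -/
def lieBkt {Ω : Set ℂ} (hΩ : IsOpen Ω) (f g : ↥(analyticAlg Ω)) : ↥(analyticAlg Ω) :=
  ⟨(f : Ω → ℂ) * derivΩ Ω g - derivΩ Ω f * (g : Ω → ℂ),
   sub_mem (mul_mem f.2 (derivΩ_mem hΩ g.2)) (mul_mem (derivΩ_mem hΩ f.2) g.2)⟩

open Topology VectorField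

section OneDimensional

variable {𝕜 : Type*} [NontriviallyNormedField 𝕜]

lemma VectorField.lieBracket_eq_mul_deriv_sub (V W : 𝕜 → 𝕜) (x : 𝕜) :
    lieBracket 𝕜 V W x = V x * deriv W x - deriv V x * W x := by
  simp only [lieBracket, fderiv_eq_smul_deriv, smul_eq_mul]
  ring

-- Also where `deriv G x = 0`: then both sides are the junk value `0`.
lemma VectorField.pullback_eq_div_deriv (G V : 𝕜 → 𝕜) (x : 𝕜) :
    pullback 𝕜 G V x = V (G x) / deriv G x := by
  by_cases hG : deriv G x = 0
  · have hG0 : fderiv 𝕜 G x = 0 := by rw [← toSpanSingleton_deriv, hG]; simp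
    simp [pullback, hG0, hG]
  · let M : 𝕜 ≃L[𝕜] 𝕜 := .unitsEquivAut 𝕜 (.mk0 _ hG)
    have hM : (M : 𝕜 →L[𝕜] 𝕜) = fderiv 𝕜 G x := by ext; simp [M]
    rw [pullback_eq_of_fderiv_eq hM]
    simp [M, div_eq_mul_inv]

lemma deriv_comp_mul_deriv_eq_one {F G : 𝕜 → 𝕜} {x : 𝕜} (hF : DifferentiableAt 𝕜 F (G x))
    (hG : DifferentiableAt 𝕜 G x) (hFG : F ∘ G =ᶠ[𝓝 x] id) :
    deriv F (G x) * deriv G x = 1 :=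
  ((hF.hasDerivAt.comp x hG.hasDerivAt).congr_of_eventuallyEq hFG.symm).unique (hasDerivAt_id x)

end OneDimensional

section AnalyticAlg

variable {Ω Ω₁ Ω₂ : Set ℂ}

@[simp] lemma extFun_apply (f : Ω → ℂ) (z : Ω) : extFun Ω f z = f z := by
  simp [extFun]

lemma differentiableOn_extFun {f : Ω → ℂ} (hf : f ∈ analyticAlg Ω) :
    DifferentiableOn ℂ (extFun Ω f) Ω := by
  obtain ⟨F, hF, hFf⟩ := hf
  refine hF.congr fun z hz => ?_
  simp [extFun, hz, hFf ⟨z, hz⟩]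

lemma differentiableAt_extFun (hΩ : IsOpen Ω) {f : Ω → ℂ} (hf : f ∈ analyticAlg Ω) (z : Ω) :
    DifferentiableAt ℂ (extFun Ω f) z :=
  (differentiableOn_extFun hf).differentiableAt (hΩ.mem_nhds z.2)

lemma derivΩ_eq_deriv (hΩ : IsOpen Ω) {f : Ω → ℂ} {F : ℂ → ℂ}
    (hFf : ∀ z : Ω, F z = f z) (z : Ω) : derivΩ Ω f z = deriv F z := by
  apply Filter.EventuallyEq.deriv_eq
  filter_upwards [hΩ.mem_nhds z.2] with w hw
  simp [extFun, hw, hFf ⟨w, hw⟩]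

variable {γ : Ω₁ → Ω₂} {δ : Ω₂ → Ω₁}

lemma derivΩ_mul_derivΩ_eq_one (h₁ : IsOpen Ω₁) (h₂ : IsOpen Ω₂)
    (hγa : (fun z : Ω₁ => (γ z : ℂ)) ∈ analyticAlg Ω₁)
    (hδa : (fun w : Ω₂ => (δ w : ℂ)) ∈ analyticAlg Ω₂)
    (hδγ : Function.RightInverse δ γ) (w : Ω₂) :
    derivΩ Ω₁ (fun z => (γ z : ℂ)) (δ w) * derivΩ Ω₂ (fun w => (δ w : ℂ)) w = 1 := by
  have hinv :
      extFun Ω₁ (fun z => (γ z : ℂ)) ∘ extFun Ω₂ (fun w => (δ w : ℂ)) =ᶠ[𝓝 (w : ℂ)] id := by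
    filter_upwards [h₂.mem_nhds w.2] with x hx
    simp [extFun, hx, hδγ ⟨x, hx⟩]
  have hγ' : DifferentiableAt ℂ (extFun Ω₁ fun z => (γ z : ℂ))
      (extFun Ω₂ (fun w => (δ w : ℂ)) w) := by
    rw [extFun_apply]
    exact differentiableAt_extFun h₁ hγa (δ w)
  simpa [derivΩ] using deriv_comp_mul_deriv_eq_one hγ' (differentiableAt_extFun h₂ hδa w) hinv

def pullbackΩ (δ : Ω₂ → Ω₁) (f : Ω₁ → ℂ) : Ω₂ → ℂ :=
  fun w => f (δ w) / derivΩ Ω₂ (fun w => (δ w : ℂ)) w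

lemma pullbackΩ_eq_pullback (f : Ω₁ → ℂ) (w : Ω₂) :
    pullbackΩ δ f w = pullback ℂ (extFun Ω₂ fun w => (δ w : ℂ)) (extFun Ω₁ f) w := by
  rw [pullback_eq_div_deriv, extFun_apply, extFun_apply]
  rfl

lemma pullbackΩ_add (f g : Ω₁ → ℂ) :
    pullbackΩ δ (f + g) = pullbackΩ δ f + pullbackΩ δ g := by
  ext w
  simp [pullbackΩ, add_div]

lemma pullbackΩ_pullbackΩ (hγδ : Function.LeftInverse δ γ)
    (h : ∀ z, derivΩ Ω₂ (fun w => (δ w : ℂ)) (γ z) * derivΩ Ω₁ (fun z => (γ z : ℂ)) z = 1)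
    (f : Ω₁ → ℂ) : pullbackΩ γ (pullbackΩ δ f) = f := by
  ext z
  simp only [pullbackΩ, hγδ z, div_div, h z, div_one]

lemma pullbackΩ_mem (h₂ : IsOpen Ω₂)
    (hδa : (fun w : Ω₂ => (δ w : ℂ)) ∈ analyticAlg Ω₂)
    (hδ' : ∀ w, derivΩ Ω₂ (fun w => (δ w : ℂ)) w ≠ 0) {f : Ω₁ → ℂ} (hf : f ∈ analyticAlg Ω₁) :
    pullbackΩ δ f ∈ analyticAlg Ω₂ := by
  set G := extFun Ω₂ fun w => (δ w : ℂ)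
  refine ⟨pullback ℂ G (extFun Ω₁ f), ?_, fun w => (pullbackΩ_eq_pullback f w).symm⟩
  have hmaps : Set.MapsTo G Ω₂ Ω₁ := fun x hx => by simp [G, extFun, hx]
  have hG := differentiableOn_extFun hδa
  rw [show pullback ℂ G (extFun Ω₁ f) = fun x => extFun Ω₁ f (G x) / deriv G x from
    funext (pullback_eq_div_deriv _ _)]
  exact ((differentiableOn_extFun hf).comp hG hmaps).div
    (hG.analyticOnNhd h₂).deriv.differentiableOn fun x hx => hδ' ⟨x, hx⟩

lemma pullbackΩ_bracket (h₁ : IsOpen Ω₁) (h₂ : IsOpen Ω₂)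
    (hδa : (fun w : Ω₂ => (δ w : ℂ)) ∈ analyticAlg Ω₂)
    {f g : Ω₁ → ℂ} (hf : f ∈ analyticAlg Ω₁) (hg : g ∈ analyticAlg Ω₁) :
    pullbackΩ δ (f * derivΩ Ω₁ g - derivΩ Ω₁ f * g) =
      pullbackΩ δ f * derivΩ Ω₂ (pullbackΩ δ g) - derivΩ Ω₂ (pullbackΩ δ f) * pullbackΩ δ g := by
  set G := extFun Ω₂ fun w => (δ w : ℂ)
  ext w
  have hGw : G w = δ w := extFun_apply _ w
  have hG2 : ContDiffAt ℂ 2 G w :=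
    ((differentiableOn_extFun hδa).contDiffOn h₂).contDiffAt (h₂.mem_nhds w.2)
  have hderiv (u : Ω₁ → ℂ) :
      derivΩ Ω₂ (pullbackΩ δ u) w = deriv (pullback ℂ G (extFun Ω₁ u)) w :=
    derivΩ_eq_deriv h₂ (fun x => (pullbackΩ_eq_pullback u x).symm) w
  calc pullbackΩ δ (f * derivΩ Ω₁ g - derivΩ Ω₁ f * g) w
      = lieBracket ℂ (extFun Ω₁ f) (extFun Ω₁ g) (G w) / deriv G w := by
        rw [lieBracket_eq_mul_deriv_sub, hGw]
        simp [pullbackΩ, derivΩ, G]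
    _ = pullback ℂ G (lieBracket ℂ (extFun Ω₁ f) (extFun Ω₁ g)) w :=
        (pullback_eq_div_deriv _ _ _).symm
    _ = lieBracket ℂ (pullback ℂ G (extFun Ω₁ f)) (pullback ℂ G (extFun Ω₁ g)) w :=
        pullback_lieBracket minSmoothness_of_isRCLikeNormedField.le hG2
          (hGw ▸ differentiableAt_extFun h₁ hf (δ w)) (hGw ▸ differentiableAt_extFun h₁ hg (δ w))
    _ = _ := by
        rw [lieBracket_eq_mul_deriv_sub, ← hderiv, ← hderiv, ← pullbackΩ_eq_pullback,
          ← pullbackΩ_eq_pullback]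
        rfl

end AnalyticAlg

theorem stmt11_general (Ω₁ Ω₂ : Set ℂ) (h₁ : IsOpen Ω₁) (h₂ : IsOpen Ω₂)
    (γ : Ω₁ → Ω₂) (δ : Ω₂ → Ω₁)
    (hγδ : Function.LeftInverse δ γ) (hδγ : Function.RightInverse δ γ)
    (hγa : (fun z : Ω₁ => (γ z : ℂ)) ∈ analyticAlg Ω₁)
    (hδa : (fun w : Ω₂ => (δ w : ℂ)) ∈ analyticAlg Ω₂) :
    (∀ w : Ω₂, derivΩ Ω₂ (fun w : Ω₂ => (δ w : ℂ)) w ≠ 0) ∧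
    ∃ φ : ↥(analyticAlg Ω₁) ≃+ ↥(analyticAlg Ω₂),
      (∀ (f : ↥(analyticAlg Ω₁)) (w : Ω₂),
        (φ f).1 w = f.1 (δ w) / derivΩ Ω₂ (fun w : Ω₂ => (δ w : ℂ)) w) ∧
      ∀ f g, φ (lieBkt h₁ f g) = lieBkt h₂ (φ f) (φ g) := by
  have hδγ' := derivΩ_mul_derivΩ_eq_one h₁ h₂ hγa hδa hδγ
  have hγδ' := derivΩ_mul_derivΩ_eq_one h₂ h₁ hδa hγa hγδ
  have hδ' w : derivΩ Ω₂ (fun w => (δ w : ℂ)) w ≠ 0 := right_ne_zero_of_mul_eq_one (hδγ' w)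
  have hγ' z : derivΩ Ω₁ (fun z => (γ z : ℂ)) z ≠ 0 := right_ne_zero_of_mul_eq_one (hγδ' z)
  let φ : ↥(analyticAlg Ω₁) ≃+ ↥(analyticAlg Ω₂) :=
    { toFun f := ⟨pullbackΩ δ f, pullbackΩ_mem h₂ hδa hδ' f.2⟩
      invFun g := ⟨pullbackΩ γ g, pullbackΩ_mem h₁ hγa hγ' g.2⟩
      left_inv f := Subtype.ext (pullbackΩ_pullbackΩ hγδ hγδ' f)
      right_inv g := Subtype.ext (pullbackΩ_pullbackΩ hδγ hδγ' g)
      map_add' f g := Subtype.ext (pullbackΩ_add f.1 g.1) }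
  exact ⟨hδ', φ, fun _ _ => rfl, fun f g => Subtype.ext (pullbackΩ_bracket h₁ h₂ hδa f.2 g.2)⟩

/-- a conformal bijection induces a Lie ring isomorphism
`f ↦ (f ∘ γ⁻¹)/(γ⁻¹)'`. -/
theorem stmt11 (Ω₁ Ω₂ : Set ℂ) (h₁ : IsOpen Ω₁) (hc₁ : IsConnected Ω₁) (h₂ : IsOpen Ω₂)
    (γ : Ω₁ → Ω₂) (δ : Ω₂ → Ω₁)
    (hγδ : Function.LeftInverse δ γ) (hδγ : Function.RightInverse δ γ)
    (hγa : (fun z : Ω₁ => (γ z : ℂ)) ∈ analyticAlg Ω₁)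
    (hδa : (fun w : Ω₂ => (δ w : ℂ)) ∈ analyticAlg Ω₂) :
    (∀ w : Ω₂, derivΩ Ω₂ (fun w : Ω₂ => (δ w : ℂ)) w ≠ 0) ∧
    ∃ φ : ↥(analyticAlg Ω₁) ≃+ ↥(analyticAlg Ω₂),
      (∀ (f : ↥(analyticAlg Ω₁)) (w : Ω₂),
        (φ f).1 w = f.1 (δ w) / derivΩ Ω₂ (fun w : Ω₂ => (δ w : ℂ)) w) ∧
      ∀ f g, φ (lieBkt h₁ f g) = lieBkt h₂ (φ f) (φ g) :=
  stmt11_general Ω₁ Ω₂ h₁ h₂ γ δ hγδ hδγ hγa hδa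
end
end

section
/- Let Ω₁, Ω₂ ⊆ ℂ be nonempty open connected sets and let φ : 𝒜(Ω₁) → 𝒜(Ω₂) be an isomorphism of Lie rings. Then there exists a field automorphism ψ : ℂ → ℂ such that φ(λ·f) = ψ(λ)·φ(f) for every λ ∈ ℂ and every f ∈ 𝒜(Ω₁). -/
open Complex
open scoped Classical

noncomputable section

/-!
If `f ≠ 0` and `f g' - f' g = 0`, then `g / f` has zero derivative near a point where `f ≠ 0`,
so `g = c f` there and, by the identity theorem, on all of the connected `Ω`. Thus the centralizer
of `f` is the line `ℂ f`, and `φ` maps lines onto lines. For non-proportional `f, g`, comparing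
`φ (λ (f + g))` with `φ (λ f) + φ (λ g)` in the independent pair `φ f, φ g` shows that `φ (λ ·)`
multiplies `φ f` and `φ g` by the same scalar `ψ λ`. Since `𝒜(Ω)` has dimension at least two,
`ψ` does not depend on `f`, and additivity of `φ` makes it a ring automorphism.
-/

open Set Submodule

theorem exists_eqOn_smul_of_wronskian_eq_zero {Ω : Set ℂ} (hΩ : IsOpen Ω)
    (hΩc : IsPreconnected Ω) {F G : ℂ → ℂ} (hF : DifferentiableOn ℂ F Ω)
    (hG : DifferentiableOn ℂ G Ω) (hW : ∀ z ∈ Ω, F z * deriv G z - deriv F z * G z = 0)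
    {z₀ : ℂ} (hz₀ : z₀ ∈ Ω) (hF₀ : F z₀ ≠ 0) : ∃ c : ℂ, EqOn G (c • F) Ω := by
  obtain ⟨ε, hε, hball⟩ := Metric.isOpen_iff.mp
    (hF.continuousOn.isOpen_inter_preimage hΩ isOpen_compl_singleton) z₀ ⟨hz₀, hF₀⟩
  have hBΩ : Metric.ball z₀ ε ⊆ Ω := fun z hz => (hball hz).1
  have hBF : ∀ z ∈ Metric.ball z₀ ε, F z ≠ 0 := fun z hz => (hball hz).2
  have hderiv : EqOn (deriv (G / F)) 0 (Metric.ball z₀ ε) := by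
    intro z hz
    have hzΩ : Ω ∈ nhds z := hΩ.mem_nhds (hBΩ hz)
    rw [deriv_div (hG.differentiableAt hzΩ) (hF.differentiableAt hzΩ) (hBF z hz), Pi.zero_apply,
      div_eq_zero_iff]
    left
    linear_combination hW z (hBΩ hz)
  obtain ⟨c, hc⟩ := Metric.isOpen_ball.exists_is_const_of_deriv_eq_zero
    (convex_ball z₀ ε).isPreconnected ((hG.mono hBΩ).div (hF.mono hBΩ) hBF) hderiv
  refine ⟨c, (hG.analyticOnNhd hΩ).eqOn_of_preconnected_of_eventuallyEq
    ((hF.const_smul c).analyticOnNhd hΩ) hΩc hz₀ ?_⟩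
  filter_upwards [Metric.ball_mem_nhds z₀ hε] with z hz
  simpa [div_eq_iff (hBF z hz)] using hc z hz

lemma derivΩ_eq {Ω : Set ℂ} (hΩ : IsOpen Ω) {f : Ω → ℂ} {F : ℂ → ℂ}
    (hFf : ∀ z : Ω, F z = f z) (z : Ω) : derivΩ Ω f z = deriv F z := by
  have hev : extFun Ω f =ᶠ[nhds (z : ℂ)] F := by
    filter_upwards [hΩ.mem_nhds z.2] with w hw
    simp [extFun, hw, hFf ⟨w, hw⟩]
  exact hev.deriv_eq

lemma derivΩ_smul {Ω : Set ℂ} (f : Ω → ℂ) (c : ℂ) : derivΩ Ω (c • f) = c • derivΩ Ω f := by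
  have hext : extFun Ω (c • f) = fun w => c * extFun Ω f w := by
    funext w; simp only [extFun]; split <;> simp
  funext z
  simp only [derivΩ, hext, Pi.smul_apply, smul_eq_mul]
  exact deriv_const_mul_field c

lemma lieBkt_smul_self {Ω : Set ℂ} (hΩ : IsOpen Ω) (f : analyticAlg Ω) (c : ℂ) :
    lieBkt hΩ f (c • f) = 0 := by
  ext z
  change (f : Ω → ℂ) z * derivΩ Ω (c • (f : Ω → ℂ)) z - derivΩ Ω f z * (c * (f : Ω → ℂ) z) = 0
  rw [derivΩ_smul, Pi.smul_apply, smul_eq_mul]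
  ring

theorem lieBkt_eq_zero_iff {Ω : Set ℂ} (hΩ : IsOpen Ω) (hΩc : IsPreconnected Ω)
    {f : analyticAlg Ω} (hf : f ≠ 0) (g : analyticAlg Ω) : lieBkt hΩ f g = 0 ↔ g ∈ ℂ ∙ f := by
  refine ⟨fun h => ?_, fun h => ?_⟩
  · obtain ⟨F, hF, hFf⟩ := f.2
    obtain ⟨G, hG, hGg⟩ := g.2
    obtain ⟨z₀, hz₀⟩ : ∃ z, (f : Ω → ℂ) z ≠ 0 := by
      by_contra! h₀
      exact hf (Subtype.ext (funext h₀))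
    have hW : ∀ z ∈ Ω, F z * deriv G z - deriv F z * G z = 0 := fun z hz => by
      simpa [lieBkt, derivΩ_eq hΩ hFf, derivΩ_eq hΩ hGg, ← hFf, ← hGg] using
        congr_fun (congrArg Subtype.val h) ⟨z, hz⟩
    obtain ⟨c, hc⟩ := exists_eqOn_smul_of_wronskian_eq_zero hΩ hΩc hF hG hW z₀.2
      (by rwa [hFf])
    refine mem_span_singleton.mpr ⟨c, Subtype.ext (funext fun z => ?_)⟩
    simpa [← hFf, ← hGg] using (hc z.2).symm
  · obtain ⟨c, rfl⟩ := mem_span_singleton.mp h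
    exact lieBkt_smul_self hΩ f c

theorem one_lt_rank_analyticAlg {Ω : Set ℂ} (hΩ : IsOpen Ω) (hne : Ω.Nonempty) :
    1 < Module.rank ℂ (analyticAlg Ω) := by
  obtain ⟨z, hz⟩ := hne
  obtain ⟨x, hx, y, hy, hxy⟩ := (infinite_of_mem_nhds z (hΩ.mem_nhds hz)).nontrivial
  let ι : analyticAlg Ω := ⟨Subtype.val, id, differentiableOn_id, fun _ => rfl⟩
  have hindep : LinearIndependent ℂ ![1, ι] := by
    refine (LinearIndependent.pair_iff' ?_).mpr fun a ha => hxy ?_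
    · exact fun h => by simpa using congr_fun (congrArg Subtype.val h) ⟨x, hx⟩
    · have hval (w : Ω) : a = w := by simpa [ι] using congr_fun (congrArg Subtype.val ha) w
      exact (hval ⟨x, hx⟩).symm.trans (hval ⟨y, hy⟩)
  exact Cardinal.one_lt_two.trans_le (by simpa using hindep.cardinal_le_rank)

section Semilinear

variable {K V W : Type*} [Field K] [AddCommGroup V] [Module K V] [AddCommGroup W] [Module K W]

theorem exists_notMem_span_singleton_of_one_lt_rank (hV : 1 < Module.rank K V) (f : V) :
    ∃ g, g ∉ K ∙ f := by
  have := mt rank_le_one_iff.mpr hV.not_ge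
  push Not at this
  simpa [mem_span_singleton] using this f

namespace AddEquiv

variable (φ : V ≃+ W)

theorem exists_map_smul_eq_smul (hφ : ∀ f ≠ 0, ∀ g, g ∈ K ∙ f ↔ φ g ∈ K ∙ φ f)
    (c : K) (f : V) : ∃ a : K, φ (c • f) = a • φ f := by
  rcases eq_or_ne f 0 with rfl | hf
  · exact ⟨0, by simp⟩
  · exact mem_span_singleton.mp ((hφ f hf _).mp (smul_mem _ c (mem_span_singleton_self f)))
      |>.imp fun _ => Eq.symm

theorem eq_of_map_smul_eq_smul_of_notMem_span_singleton
    (hφ : ∀ f ≠ 0, ∀ g, g ∈ K ∙ f ↔ φ g ∈ K ∙ φ f)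
    {f g : V} (hf : f ≠ 0) (hg : g ∉ K ∙ f) {c a b : K}
    (ha : φ (c • f) = a • φ f) (hb : φ (c • g) = b • φ g) : a = b := by
  have hφf : φ f ≠ 0 := by simpa using hf
  have hindep : LinearIndependent K ![φ f, φ g] := by
    rw [LinearIndependent.pair_iff' hφf]
    intro r hr
    exact hg ((hφ f hf g).mpr (mem_span_singleton.mpr ⟨r, hr⟩))
  obtain ⟨d, hd⟩ := exists_map_smul_eq_smul φ hφ c (f + g)
  have hsum : (a - d) • φ f + (b - d) • φ g = 0 := by
    rw [map_add, smul_add, map_add, ha, hb] at hd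
    linear_combination (norm := module) hd
  obtain ⟨had, hbd⟩ := LinearIndependent.pair_iff.mp hindep _ _ hsum
  exact (sub_eq_zero.mp had).trans (sub_eq_zero.mp hbd).symm

theorem map_smul_eq_smul_of_ne_zero (hV : 1 < Module.rank K V)
    (hφ : ∀ f ≠ 0, ∀ g, g ∈ K ∙ f ↔ φ g ∈ K ∙ φ f) {f₀ : V} (hf₀ : f₀ ≠ 0) {c a : K}
    (ha : φ (c • f₀) = a • φ f₀) (f : V) : φ (c • f) = a • φ f := by
  rcases eq_or_ne f 0 with rfl | hf
  · simp
  obtain ⟨b, hb⟩ := exists_map_smul_eq_smul φ hφ c f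
  suffices a = b by rw [hb, this]
  by_cases hf₀f : f ∈ K ∙ f₀
  · obtain ⟨r, rfl⟩ := mem_span_singleton.mp hf₀f
    have hr : r ≠ 0 := by rintro rfl; simp at hf
    obtain ⟨g, hg⟩ := exists_notMem_span_singleton_of_one_lt_rank hV f₀
    obtain ⟨e, he⟩ := exists_map_smul_eq_smul φ hφ c g
    have hg' : g ∉ K ∙ (r • f₀) := by rwa [span_singleton_smul_eq (IsUnit.mk0 r hr)]
    exact (eq_of_map_smul_eq_smul_of_notMem_span_singleton φ hφ hf₀ hg ha he).trans
      (eq_of_map_smul_eq_smul_of_notMem_span_singleton φ hφ hf hg' hb he).symm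
  · exact eq_of_map_smul_eq_smul_of_notMem_span_singleton φ hφ hf₀ hf₀f ha hb

theorem exists_ringEquiv_map_smul (hV : 1 < Module.rank K V)
    (hφ : ∀ f ≠ 0, ∀ g, g ∈ K ∙ f ↔ φ g ∈ K ∙ φ f) :
    ∃ σ : K ≃+* K, ∀ c f, φ (c • f) = σ c • φ f := by
  obtain ⟨f₀, hf₀⟩ := exists_notMem_span_singleton_of_one_lt_rank hV 0
  replace hf₀ : f₀ ≠ 0 := by simpa using hf₀
  choose ψ hψ₀ using fun c => exists_map_smul_eq_smul φ hφ c f₀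
  have hψ c f : φ (c • f) = ψ c • φ f := map_smul_eq_smul_of_ne_zero φ hV hφ hf₀ (hψ₀ c) f
  have hφf₀ : φ f₀ ≠ 0 := by simpa using hf₀
  have hψ_inj : Function.Injective (· • φ f₀ : K → W) := smul_left_injective K hφf₀
  let σ : K →+* K :=
    { toFun := ψ
      map_one' := hψ_inj (by simpa using (hψ 1 f₀).symm)
      map_mul' := fun a b => hψ_inj (by simp only [← hψ, mul_smul])
      map_zero' := hψ_inj (by simpa using (hψ 0 f₀).symm)
      map_add' := fun a b => hψ_inj (by simp only [← hψ, add_smul, map_add]) }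
  refine ⟨RingEquiv.ofBijective σ ⟨σ.injective, fun μ => ?_⟩, hψ⟩
  obtain ⟨c, hc⟩ := mem_span_singleton.mp <| (hφ f₀ hf₀ (φ.symm (μ • φ f₀))).mpr <| by
    simpa using smul_mem _ μ (mem_span_singleton_self (φ f₀))
  exact ⟨c, hψ_inj (by simp [σ, ← hψ, hc])⟩

end AddEquiv

end Semilinear

/-- a Lie ring isomorphism between `A(Omega1)` and `A(Omega2)` induces a
field automorphism `psi` of `C` with `phi (lam • f) = psi lam • phi f`. -/
theorem stmt12 (Ω₁ Ω₂ : Set ℂ) (h₁ : IsOpen Ω₁) (hc₁ : IsConnected Ω₁)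
    (h₂ : IsOpen Ω₂) (hc₂ : IsConnected Ω₂)
    (φ : ↥(analyticAlg Ω₁) ≃+ ↥(analyticAlg Ω₂))
    (hφ : ∀ f g, φ (lieBkt h₁ f g) = lieBkt h₂ (φ f) (φ g)) :
    ∃ ψ : ℂ ≃+* ℂ, ∀ (lam : ℂ) (f : ↥(analyticAlg Ω₁)),
      φ (lam • f) = ψ lam • φ f := by
  refine φ.exists_ringEquiv_map_smul (one_lt_rank_analyticAlg h₁ hc₁.nonempty) fun f hf g => ?_
  rw [← lieBkt_eq_zero_iff h₁ hc₁.isPreconnected hf,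
    ← lieBkt_eq_zero_iff h₂ hc₂.isPreconnected (by simpa using hf), ← hφ, φ.map_eq_zero_iff]
end
end

section
/- Let Ω ⊆ ℂ be a nonempty open set and let 𝓛 be a ℂ-linear subspace of 𝒜(Ω) that is closed under the Lie bracket (a Lie subalgebra). Then 𝓛 has codimension one as a ℂ-vector subspace of 𝒜(Ω) if and only if there exists α ∈ Ω such that 𝓛 = M_α = {f ∈ 𝒜(Ω) : f(α) = 0}. -/
set_option synthInstance.maxHeartbeats 1000000
set_option maxHeartbeats 1000000

open Complex
open scoped Classical

noncomputable section

/-!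
The bracket is the Wronskian `f * D g - D f * g` of the derivation `D = d/dz`, and a subspace
of codimension one is the kernel of a surjective functional `φ`. Splitting
`f = (f - φ f • e) + φ f • e` along some `e` with `φ e = 1` gives
`φ [f, g] = φ f * φ [e, g] - φ g * φ [e, f]`, and with the Jacobi identity `g ↦ φ [e, g]` kills
brackets of kernel elements.

If `φ 1 = 0` then `φ ∘ D = μ • φ`, so every exponential `exp (a z)` with `a ≠ μ` lies in the
kernel; writing `exp (l z)` as a multiple of a bracket of two of them gives `φ [e, exp (l z)] = 0`,
hence `μ = 0`, and then `[exp (-z) g, exp z] = 2 g - g'` forces `φ = 0`. So `φ 1 ≠ 0`; normalised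
to `φ 1 = 1`, the brackets with `z` and `z ^ 2` give `φ (z f) = φ z * φ f`. Then `α = φ z` lies in
`Ω`, since otherwise `z - α` would be a unit, and `φ` vanishes on `(z - α) 𝒜(Ω) = M_α`.
-/

open Topology

theorem Submodule.finrank_quotient_eq_one_iff {K V : Type*} [Field K] [AddCommGroup V]
    [Module K V] (L : Submodule K V) :
    Module.finrank K (V ⧸ L) = 1 ↔
      ∃ φ : V →ₗ[K] K, Function.Surjective φ ∧ LinearMap.ker φ = L := by
  constructor
  · intro h
    have : Module.Finite K (V ⧸ L) := Module.finite_of_finrank_eq_succ h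
    let e := LinearEquiv.ofFinrankEq (V ⧸ L) K (by rw [h, Module.finrank_self])
    exact ⟨e.toLinearMap ∘ₗ L.mkQ, e.surjective.comp L.mkQ_surjective, by
      rw [LinearEquiv.ker_comp, Submodule.ker_mkQ]⟩
  · rintro ⟨φ, hφ, rfl⟩
    rw [(φ.quotKerEquivOfSurjective hφ).finrank_eq, Module.finrank_self]

namespace Derivation

variable {K A : Type*} [Field K] [CommRing A] [Algebra K A] (D : Derivation K A A)

def wronskian (f g : A) : A := f * D g - D f * g

lemma wronskian_swap (f g : A) : D.wronskian g f = -D.wronskian f g := by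
  unfold wronskian; ring

lemma wronskian_one_left (g : A) : D.wronskian 1 g = D g := by
  simp [wronskian]

lemma wronskian_jacobi (f g h : A) :
    D.wronskian f (D.wronskian g h) + D.wronskian g (D.wronskian h f)
      + D.wronskian h (D.wronskian f g) = 0 := by
  simp only [wronskian, map_sub, leibniz, smul_eq_mul]; ring

lemma wronskian_smul_right (c : K) (f g : A) : D.wronskian f (c • g) = c • D.wronskian f g := by
  simp only [wronskian, map_smul, mul_smul_comm, smul_sub]

variable {D} {φ : A →ₗ[K] K}

lemma apply_wronskian_eq (hφ : ∀ f g, φ f = 0 → φ g = 0 → φ (D.wronskian f g) = 0)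
    {e : A} (he : φ e = 1) (f g : A) :
    φ (D.wronskian f g) = φ f * φ (D.wronskian e g) - φ g * φ (D.wronskian e f) := by
  have hproj : ∀ x, φ (x - φ x • e) = 0 := fun x => by simp [he]
  have hexpand : D.wronskian (f - φ f • e) (g - φ g • e)
      = D.wronskian f g - φ g • D.wronskian f e - φ f • D.wronskian e g := by
    simp only [wronskian, map_sub, map_smul]
    simp only [Algebra.smul_def]
    ring
  have h := hφ _ _ (hproj f) (hproj g)
  rw [hexpand, D.wronskian_swap e f] at h
  simp only [map_sub, LinearMap.map_smul, map_neg, smul_eq_mul] at h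
  linear_combination h

lemma apply_wronskian_wronskian_eq_zero
    (hφ : ∀ f g, φ f = 0 → φ g = 0 → φ (D.wronskian f g) = 0)
    {e : A} (he : φ e = 1) {g h : A} (hg : φ g = 0) (hh : φ h = 0) :
    φ (D.wronskian e (D.wronskian g h)) = 0 := by
  have hjac := congrArg φ (D.wronskian_jacobi e g h)
  simp only [map_add, map_zero] at hjac
  have h₁ := apply_wronskian_eq hφ he g (D.wronskian h e)
  have h₂ := apply_wronskian_eq hφ he h (D.wronskian e g)
  have hswap : φ (D.wronskian h e) = -φ (D.wronskian e h) := by rw [D.wronskian_swap, map_neg]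
  rw [hg] at h₁
  rw [hh] at h₂
  linear_combination hjac - h₁ - h₂ + φ (D.wronskian e g) * hswap

lemma apply_derivation_eq (hφ : ∀ f g, φ f = 0 → φ g = 0 → φ (D.wronskian f g) = 0)
    {e : A} (he : φ e = 1) (h1 : φ 1 = 0) (f : A) : φ (D f) = φ (D e) * φ f := by
  have h := apply_wronskian_eq hφ he f 1
  rw [D.wronskian_swap 1 f, D.wronskian_swap 1 e, wronskian_one_left, wronskian_one_left, h1,
    map_neg, map_neg] at h
  linear_combination -h

variable [CharZero K]

theorem apply_one_ne_zero (E : AddChar K A) (hE : ∀ a, D (E a) = a • E a)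
    (hφ : ∀ f g, φ f = 0 → φ g = 0 → φ (D.wronskian f g) = 0) {e : A} (he : φ e = 1) :
    φ 1 ≠ 0 := by
  intro h1
  have hDφ := apply_derivation_eq hφ he h1
  set μ := φ (D e)
  have hEμ : ∀ a, a ≠ μ → φ (E a) = 0 := by
    intro a ha
    have h := hDφ (E a)
    rw [hE, LinearMap.map_smul, smul_eq_mul] at h
    exact (mul_eq_zero.1 (by linear_combination h : (a - μ) * φ (E a) = 0)).resolve_left
      (sub_ne_zero.2 ha)
  have hWE : ∀ l, φ (D.wronskian e (E l)) = 0 := by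
    intro l
    obtain ⟨a, ha⟩ := Infinite.exists_notMem_finset ({μ, l - μ, l / 2} : Finset K)
    simp only [Finset.mem_insert, Finset.mem_singleton, not_or] at ha
    obtain ⟨haμ, haμ', hal⟩ := ha
    have hEl : D.wronskian (E a) (E (l - a)) = (l - 2 * a) • E l := by
      rw [show E l = E a * E (l - a) by rw [← AddChar.map_add_eq_mul, add_sub_cancel]]
      simp only [wronskian, hE, Algebra.smul_def, map_sub, map_mul, map_ofNat]
      ring
    have h := apply_wronskian_wronskian_eq_zero hφ he (hEμ a haμ)
      (hEμ (l - a) fun h => haμ' (by linear_combination -h))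
    rw [hEl, wronskian_smul_right, LinearMap.map_smul, smul_eq_mul] at h
    exact (mul_eq_zero.1 h).resolve_left fun h => hal (by linear_combination -h / 2)
  have hμ : μ = 0 := by
    have h := hWE 0
    rw [AddChar.map_zero_eq_one, D.wronskian_swap, wronskian_one_left, map_neg] at h
    exact neg_eq_zero.1 h
  have hφD : ∀ g, φ (D g) = 0 := fun g => by rw [hDφ, hμ, zero_mul]
  have hφ_eq_zero : ∀ g, φ g = 0 := by
    intro g
    have hEE : E (-1) * E 1 = 1 := by rw [← AddChar.map_add_eq_mul, neg_add_cancel,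
      AddChar.map_zero_eq_one]
    have hconj : D.wronskian (E (-1) * g) (E 1) = g + g - D g := by
      simp only [wronskian, leibniz, hE, smul_eq_mul, Algebra.smul_def, map_neg, map_one]
      linear_combination (g + g - D g) * hEE
    have h := apply_wronskian_eq hφ he (E (-1) * g) (E 1)
    rw [hconj, hWE, hEμ 1 (by rw [hμ]; exact one_ne_zero), map_sub, map_add, hφD] at h
    linear_combination h / 2
  exact zero_ne_one ((hφ_eq_zero e).symm.trans he)

theorem apply_mul_eq_mul (hφ : ∀ f g, φ f = 0 → φ g = 0 → φ (D.wronskian f g) = 0)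
    (h1 : φ 1 = 1) {z : A} (hz : D z = 1) (f : A) : φ (z * f) = φ z * φ f := by
  have hW : ∀ f g, φ (D.wronskian f g) = φ f * φ (D g) - φ g * φ (D f) := fun f g => by
    simpa only [wronskian_one_left] using apply_wronskian_eq hφ h1 f g
  have hDz2 : D (z * z) = z + z := by rw [leibniz, hz, smul_eq_mul, mul_one]
  have hz2 : φ (z * z) = φ z * φ z := by
    have h := hW z (z * z)
    rw [show D.wronskian z (z * z) = z * z by simp only [wronskian, hDz2, hz]; ring, hDz2, hz,
      map_add, h1] at h
    linear_combination h / 2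
  have hzD : ∀ f, φ (z * D f) = φ z * φ (D f) := by
    intro f
    have h := hW f z
    rw [show D.wronskian f z = f - z * D f by simp only [wronskian, hz]; ring, hz, h1,
      map_sub] at h
    linear_combination -h
  have hsum : φ (z * f) + φ (z * (z * D f)) = φ z * φ f + φ z * (φ z * φ (D f)) := by
    have h := hzD (z * f)
    rw [leibniz, hz, smul_eq_mul, smul_eq_mul, mul_one, mul_add, map_add, map_add, hzD f] at h
    linear_combination h
  have hdiff : φ (z * f) + φ (z * f) - φ (z * (z * D f))
      = φ z * φ f + φ z * φ f - φ z * φ z * φ (D f) := by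
    have h := hW f (z * z)
    rw [show D.wronskian f (z * z) = z * f + z * f - z * (z * D f) by
      simp only [wronskian, hDz2]; ring, hDz2, hz2, map_add, map_sub, map_add] at h
    linear_combination h
  linear_combination (hsum + hdiff) / 3

end Derivation

namespace analyticAlg

variable {Ω : Set ℂ}

lemma extFun_apply (f : Ω → ℂ) (z : Ω) : extFun Ω f z = f z := dif_pos z.2

lemma extFun_add (f g : Ω → ℂ) : extFun Ω (f + g) = extFun Ω f + extFun Ω g := by
  funext z; by_cases hz : z ∈ Ω <;> simp [extFun, hz]

lemma extFun_smul (c : ℂ) (f : Ω → ℂ) : extFun Ω (c • f) = c • extFun Ω f := by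
  funext z; by_cases hz : z ∈ Ω <;> simp [extFun, hz]

lemma extFun_mul (f g : Ω → ℂ) : extFun Ω (f * g) = extFun Ω f * extFun Ω g := by
  funext z; by_cases hz : z ∈ Ω <;> simp [extFun, hz]

lemma extFun_eventuallyEq (hΩ : IsOpen Ω) {f : Ω → ℂ} {F : ℂ → ℂ} (hFf : ∀ z : Ω, F z = f z)
    (z : Ω) : extFun Ω f =ᶠ[𝓝 (z : ℂ)] F := by
  filter_upwards [hΩ.mem_nhds z.2] with w hw
  exact (extFun_apply f ⟨w, hw⟩).trans (hFf ⟨w, hw⟩).symm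

lemma derivΩ_eq_deriv (hΩ : IsOpen Ω) {f : Ω → ℂ} {F : ℂ → ℂ} (hFf : ∀ z : Ω, F z = f z)
    (z : Ω) : derivΩ Ω f z = deriv F z :=
  (extFun_eventuallyEq hΩ hFf z).deriv_eq

lemma differentiableAt_extFun (hΩ : IsOpen Ω) {f : Ω → ℂ} (hf : f ∈ analyticAlg Ω) (z : Ω) :
    DifferentiableAt ℂ (extFun Ω f) z := by
  obtain ⟨F, hF, hFf⟩ := hf
  exact (hF.differentiableAt (hΩ.mem_nhds z.2)).congr_of_eventuallyEq
    (extFun_eventuallyEq hΩ hFf z)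

def derivation (hΩ : IsOpen Ω) : Derivation ℂ (analyticAlg Ω) (analyticAlg Ω) :=
  Derivation.mk'
    { toFun := fun f => ⟨derivΩ Ω f, derivΩ_mem hΩ f.2⟩
      map_add' := fun f g => Subtype.ext <| funext fun z => by
        simp only [derivΩ, Subalgebra.coe_add, extFun_add, Pi.add_apply]
        exact deriv_add (differentiableAt_extFun hΩ f.2 z) (differentiableAt_extFun hΩ g.2 z)
      map_smul' := fun c f => Subtype.ext <| funext fun z => by
        simp only [derivΩ, Subalgebra.coe_smul, extFun_smul, Pi.smul_apply, RingHom.id_apply]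
        exact deriv_const_smul c (differentiableAt_extFun hΩ f.2 z) }
    fun f g => Subtype.ext <| funext fun z => by
      simp only [LinearMap.coe_mk, AddHom.coe_mk, derivΩ, Subalgebra.coe_mul, extFun_mul,
        smul_eq_mul, Subalgebra.coe_add, Pi.add_apply, Pi.mul_apply,
        deriv_mul (differentiableAt_extFun hΩ f.2 z) (differentiableAt_extFun hΩ g.2 z),
        extFun_apply]
      ring

lemma lieBkt_eq_wronskian (hΩ : IsOpen Ω) (f g : analyticAlg Ω) :
    lieBkt hΩ f g = (derivation hΩ).wronskian f g := rfl

def coord (Ω : Set ℂ) : analyticAlg Ω := ⟨Subtype.val, id, differentiableOn_id, fun _ => rfl⟩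

lemma derivation_coord (hΩ : IsOpen Ω) : derivation hΩ (coord Ω) = 1 :=
  Subtype.ext <| funext fun z => (derivΩ_eq_deriv hΩ (F := id) (fun _ => rfl) z).trans (deriv_id _)

def expChar (Ω : Set ℂ) : AddChar ℂ (analyticAlg Ω) where
  toFun a := ⟨fun z => exp (a * z), fun w => exp (a * w),
    (differentiable_exp.comp (differentiable_id.const_mul a)).differentiableOn, fun _ => rfl⟩
  map_zero_eq_one' := Subtype.ext <| funext fun z => by simp
  map_add_eq_mul' a b := Subtype.ext <| funext fun z => by simp [add_mul, exp_add]

lemma derivation_expChar (hΩ : IsOpen Ω) (a : ℂ) :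
    derivation hΩ (expChar Ω a) = a • expChar Ω a :=
  Subtype.ext <| funext fun z => by
    refine (derivΩ_eq_deriv hΩ (F := fun w => exp (a * w)) (fun _ => rfl) z).trans ?_
    rw [((hasDerivAt_id' (z : ℂ)).const_mul a).cexp.deriv, mul_one, mul_comm]
    rfl

def eval (α : Ω) : analyticAlg Ω →ₗ[ℂ] ℂ where
  toFun f := f.1 α
  map_add' _ _ := rfl
  map_smul' _ _ := rfl

theorem exists_eq_eval (hΩ : IsOpen Ω) (φ : analyticAlg Ω →ₗ[ℂ] ℂ) (h1 : φ 1 = 1)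
    (hcoord : ∀ f, φ (coord Ω * f) = φ (coord Ω) * φ f) : ∃ α : Ω, φ = eval α := by
  set α := φ (coord Ω)
  have hvanish : ∀ g, φ ((coord Ω - algebraMap ℂ _ α) * g) = 0 := fun g => by
    rw [sub_mul, map_sub, hcoord, Algebra.algebraMap_eq_smul_one, smul_mul_assoc, one_mul,
      LinearMap.map_smul, smul_eq_mul, sub_self]
  have hαΩ : α ∈ Ω := by
    by_contra hα
    have hne : ∀ w ∈ Ω, w - α ≠ 0 := fun w hw => sub_ne_zero.2 fun h => hα (h ▸ hw)
    let u : analyticAlg Ω := ⟨fun w => (w - α)⁻¹, fun w => (w - α)⁻¹,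
      fun w hw => ((differentiableAt_id.sub_const α).inv (hne w hw)).differentiableWithinAt,
      fun _ => rfl⟩
    have hu : (coord Ω - algebraMap ℂ _ α) * u = 1 :=
      Subtype.ext <| funext fun w => mul_inv_cancel₀ (hne w w.2)
    simpa [hu, h1] using hvanish u
  refine ⟨⟨α, hαΩ⟩, LinearMap.ext fun f => ?_⟩
  obtain ⟨F, hF, hFf⟩ := f.2
  let g : analyticAlg Ω := ⟨fun w => dslope F α w, dslope F α,
    (differentiableOn_dslope (hΩ.mem_nhds hαΩ)).2 hF, fun _ => rfl⟩
  have hfg : f = (coord Ω - algebraMap ℂ _ α) * g + algebraMap ℂ _ (f.1 ⟨α, hαΩ⟩) :=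
    Subtype.ext <| funext fun w => by
      change f.1 w = ((w : ℂ) - α) * dslope F α w + f.1 ⟨α, hαΩ⟩
      rw [← hFf, ← hFf, ← smul_eq_mul, sub_smul_dslope, sub_add_cancel]
  show φ f = f.1 ⟨α, hαΩ⟩
  rw [congrArg φ hfg, map_add, hvanish, Algebra.algebraMap_eq_smul_one, LinearMap.map_smul, h1,
    smul_eq_mul, mul_one, zero_add]

theorem exists_ker_eq_ker_eval (hΩ : IsOpen Ω) (φ : analyticAlg Ω →ₗ[ℂ] ℂ)
    (hφs : Function.Surjective φ)
    (hφ : ∀ f g, f ∈ LinearMap.ker φ → g ∈ LinearMap.ker φ → lieBkt hΩ f g ∈ LinearMap.ker φ) :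
    ∃ α : Ω, LinearMap.ker φ = LinearMap.ker (eval α) := by
  have hφ' : ∀ f g, φ f = 0 → φ g = 0 → φ ((derivation hΩ).wronskian f g) = 0 := by
    simpa only [LinearMap.mem_ker, lieBkt_eq_wronskian] using hφ
  obtain ⟨e, he⟩ := hφs 1
  have h1 : φ 1 ≠ 0 := Derivation.apply_one_ne_zero (expChar Ω) (derivation_expChar hΩ) hφ' he
  set ψ := (φ 1)⁻¹ • φ
  have hker : LinearMap.ker ψ = LinearMap.ker φ := LinearMap.ker_smul _ _ (inv_ne_zero h1)
  have hψ : ∀ f g, ψ f = 0 → ψ g = 0 → ψ ((derivation hΩ).wronskian f g) = 0 := by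
    simpa only [← LinearMap.mem_ker, hker] using hφ'
  have hψ1 : ψ 1 = 1 := inv_mul_cancel₀ h1
  obtain ⟨α, hα⟩ :=
    exists_eq_eval hΩ ψ hψ1 (Derivation.apply_mul_eq_mul hψ hψ1 (derivation_coord hΩ))
  exact ⟨α, hker.symm.trans (congrArg LinearMap.ker hα)⟩

end analyticAlg

theorem stmt14_general (Ω : Set ℂ) (hΩ : IsOpen Ω)
    (L : Submodule ℂ ↥(analyticAlg Ω))
    (hL : ∀ f g : ↥(analyticAlg Ω), f ∈ L → g ∈ L → lieBkt hΩ f g ∈ L) :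
    Module.finrank ℂ (↥(analyticAlg Ω) ⧸ L) = 1 ↔
      ∃ α : Ω, ∀ f : ↥(analyticAlg Ω), f ∈ L ↔ f.1 α = 0 := by
  rw [Submodule.finrank_quotient_eq_one_iff]
  constructor
  · rintro ⟨φ, hφs, rfl⟩
    obtain ⟨α, hα⟩ := analyticAlg.exists_ker_eq_ker_eval hΩ φ hφs hL
    exact ⟨α, fun f => by rw [hα]; rfl⟩
  · rintro ⟨α, hα⟩
    exact ⟨analyticAlg.eval α, fun c => ⟨algebraMap ℂ _ c, rfl⟩,
      Submodule.ext fun f => (hα f).symm⟩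

/-- the Lie subalgebras of codimension one in `A(Omega)` are exactly the
point-evaluation kernels `M_alpha`, `alpha in Omega`. -/
theorem stmt14 (Ω : Set ℂ) (hΩ : IsOpen Ω) (hne : Ω.Nonempty)
    (L : Submodule ℂ ↥(analyticAlg Ω))
    (hL : ∀ f g : ↥(analyticAlg Ω), f ∈ L → g ∈ L → lieBkt hΩ f g ∈ L) :
    Module.finrank ℂ (↥(analyticAlg Ω) ⧸ L) = 1 ↔
      ∃ α : Ω, ∀ f : ↥(analyticAlg Ω), f ∈ L ↔ f.1 α = 0 :=
  stmt14_general Ω hΩ L hL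

end
end

section
/- Let Ω ⊆ ℂ be nonempty open and connected, and let f, g ∈ 𝒜(Ω) with f not identically zero. Then f·g′ − f′·g = 0 on Ω if and only if there exists a unique λ ∈ ℂ such that g = λ·f on Ω. -/
/-!
Where `f` does not vanish, `f g' - f' g = f² (g / f)'`, so a vanishing Wronskian makes `g / f`
locally constant: `g = λ f` on a disc around a point where `f ≠ 0`. The identity theorem spreads
this equality to the whole connected domain, and `λ` is unique because `f` is not identically zero.
-/

open Set Filter Topology

section Wronskian

variable {𝕜 : Type*} [NontriviallyNormedField 𝕜] {f g : 𝕜 → 𝕜} {s : Set 𝕜}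

theorem deriv_div_eq_zero_of_wronskian_eq_zero {x : 𝕜} (hf : DifferentiableAt 𝕜 f x)
    (hg : DifferentiableAt 𝕜 g x) (hfx : f x ≠ 0)
    (hW : f x * deriv g x - deriv f x * g x = 0) :
    deriv (g / f) x = 0 := by
  rw [deriv_div hg hf hfx, div_eq_zero_iff]
  left
  linear_combination hW

theorem wronskian_eq_zero_of_eqOn_const_mul (hs : IsOpen s) {c : 𝕜}
    (hfg : EqOn g (fun x => c * f x) s) :
    ∀ x ∈ s, f x * deriv g x - deriv f x * g x = 0 := by
  intro x hx
  have hderiv : deriv g x = c * deriv f x := by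
    rw [(eventuallyEq_of_mem (hs.mem_nhds hx) hfg).deriv_eq, deriv_const_mul_field]
  rw [hderiv, hfg hx]
  ring

end Wronskian

theorem IsOpen.exists_eqOn_const_mul_of_wronskian_eq_zero {𝕜 : Type*} [RCLike 𝕜] {f g : 𝕜 → 𝕜}
    {s : Set 𝕜} (hs : IsOpen s) (hs' : IsPreconnected s) (hf : DifferentiableOn 𝕜 f s)
    (hg : DifferentiableOn 𝕜 g s) (hf0 : ∀ x ∈ s, f x ≠ 0)
    (hW : ∀ x ∈ s, f x * deriv g x - deriv f x * g x = 0) :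
    ∃ c, EqOn g (fun x => c * f x) s := by
  have hquot : EqOn (deriv (g / f)) 0 s := fun x hx =>
    deriv_div_eq_zero_of_wronskian_eq_zero (hf.differentiableAt (hs.mem_nhds hx))
      (hg.differentiableAt (hs.mem_nhds hx)) (hf0 x hx) (hW x hx)
  obtain ⟨c, hc⟩ := hs.exists_is_const_of_deriv_eq_zero hs' (hg.div hf hf0) hquot
  exact ⟨c, fun x hx => (div_eq_iff (hf0 x hx)).mp (hc x hx)⟩

theorem exists_eqOn_const_mul_of_wronskian_eq_zero {f g : ℂ → ℂ} {Ω : Set ℂ} (hΩ : IsOpen Ω)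
    (hΩ' : IsPreconnected Ω) (hf : DifferentiableOn ℂ f Ω) (hg : DifferentiableOn ℂ g Ω)
    {z₀ : ℂ} (hz₀ : z₀ ∈ Ω) (hfz₀ : f z₀ ≠ 0)
    (hW : ∀ z ∈ Ω, f z * deriv g z - deriv f z * g z = 0) :
    ∃ c, EqOn g (fun z => c * f z) Ω := by
  have hnonzero : Ω ∩ f ⁻¹' {0}ᶜ ∈ 𝓝 z₀ := inter_mem (hΩ.mem_nhds hz₀)
    ((hf.differentiableAt (hΩ.mem_nhds hz₀)).continuousAt.preimage_mem_nhds
      (isOpen_compl_singleton.mem_nhds hfz₀))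
  obtain ⟨r, hr, hball⟩ := Metric.mem_nhds_iff.mp hnonzero
  have hballΩ : Metric.ball z₀ r ⊆ Ω := fun z hz => (hball hz).1
  obtain ⟨c, hc⟩ := Metric.isOpen_ball.exists_eqOn_const_mul_of_wronskian_eq_zero
    (convex_ball z₀ r).isPreconnected (hf.mono hballΩ) (hg.mono hballΩ)
    (fun z hz => (hball hz).2) (fun z hz => hW z (hballΩ hz))
  have hlocal : g =ᶠ[𝓝 z₀] fun z => c * f z :=
    eventuallyEq_of_mem (Metric.ball_mem_nhds z₀ hr) hc
  refine ⟨c, (hg.analyticOnNhd hΩ).eqOn_of_preconnected_of_eventuallyEq ?_ hΩ' hz₀ hlocal⟩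
  exact ((differentiableOn_const c).mul hf).analyticOnNhd hΩ

/-- for `f` not identically zero on connected `Omega`,
`f * g' - f' * g = 0` on `Omega` iff `g` is a unique scalar multiple of `f`. -/
theorem stmt15 (Ω : Set ℂ) (hΩ : IsOpen Ω) (hc : IsConnected Ω)
    (f g : ℂ → ℂ) (hf : DifferentiableOn ℂ f Ω) (hg : DifferentiableOn ℂ g Ω)
    (hf0 : ∃ z ∈ Ω, f z ≠ 0) :
    (∀ z ∈ Ω, f z * deriv g z - deriv f z * g z = 0) ↔
      ∃! lam : ℂ, ∀ z ∈ Ω, g z = lam * f z := by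
  obtain ⟨z₀, hz₀, hfz₀⟩ := hf0
  refine ⟨fun hW => ?_, fun ⟨lam, hlam, _⟩ => wronskian_eq_zero_of_eqOn_const_mul hΩ hlam⟩
  obtain ⟨lam, hlam⟩ :=
    exists_eqOn_const_mul_of_wronskian_eq_zero hΩ hc.isPreconnected hf hg hz₀ hfz₀ hW
  exact ⟨lam, hlam, fun μ hμ => mul_right_cancel₀ hfz₀ ((hμ z₀ hz₀).symm.trans (hlam hz₀))⟩
end

section
/- Let Ω ⊆ ℂ be nonempty open and connected, let Λ be a countable dense subset of ℂ, and let f ∈ 𝒜(Ω). Then f is constant on Ω if and only if for every λ ∈ Λ, the function f − λ is either zero-free on Ω or identically zero on Ω. -/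
noncomputable section

/-- `f` analytic on connected `Omega` is constant iff for every `lam` in a
countable dense set, `f - lam` is zero-free or identically zero on `Omega`. -/
theorem stmt17 (Ω : Set ℂ) (hΩ : IsOpen Ω) (hc : IsConnected Ω)
    (Λ : Set ℂ) (hcount : Λ.Countable) (hdense : Dense Λ)
    (f : ℂ → ℂ) (hf : DifferentiableOn ℂ f Ω) :
    (∃ c : ℂ, ∀ z ∈ Ω, f z = c) ↔
      ∀ lam ∈ Λ, (∀ z ∈ Ω, f z ≠ lam) ∨ (∀ z ∈ Ω, f z = lam) := by
  constructor
  · rintro ⟨c, hcc⟩ lam _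
    by_cases h : c = lam
    · exact Or.inr fun z hz => (hcc z hz).trans h
    · exact Or.inl fun z hz hzl => h ((hcc z hz).symm.trans hzl)
  · intro h
    have hA : AnalyticOnNhd ℂ f Ω := hf.analyticOnNhd hΩ
    rcases hA.is_constant_or_isOpen hc.isPreconnected with ⟨c, hcc⟩ | hopen
    · exact ⟨c, hcc⟩
    · have hΩo : IsOpen (f '' Ω) := hopen Ω subset_rfl hΩ
      obtain ⟨z0, hz0⟩ := hc.nonempty
      have hne : (f '' Ω).Nonempty := ⟨f z0, z0, hz0, rfl⟩
      obtain ⟨lam, hlamΛ, hlamI⟩ := hdense.exists_mem_open hΩo hne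
      obtain ⟨w, hw, hfw⟩ := hlamI
      rcases h lam hlamΛ with h1 | h2
      · exact absurd hfw (h1 w hw)
      · exact ⟨lam, h2⟩

end
end

section
/- Let R be a Polish ring with unity and let I_R = {x ∈ R : there exists y ∈ R with x·y = 1}. Then I_R is an analytic subset of R; if moreover R is commutative, then I_R is a Borel subset of R. -/
open MeasureTheory

section RightInverses

variable {M : Type*} [Monoid M]

theorem setOf_exists_mul_eq_one_eq_image_fst :
    {x : M | ∃ y, x * y = 1} = Prod.fst '' {p : M × M | p.1 * p.2 = 1} := by
  ext x
  simp

theorem injOn_fst_setOf_mul_eq_one (hcomm : ∀ x y : M, x * y = y * x) :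
    Set.InjOn Prod.fst {p : M × M | p.1 * p.2 = 1} := by
  rintro ⟨x, y⟩ (hxy : x * y = 1) ⟨x', y'⟩ (hxy' : x' * y' = 1) (rfl : x = x')
  have hyx : y * x = 1 := hcomm y x ▸ hxy
  rw [left_inv_eq_right_inv hyx hxy']

variable [TopologicalSpace M] [ContinuousMul M]

theorem isClosed_setOf_mul_eq_one [T2Space M] : IsClosed {p : M × M | p.1 * p.2 = 1} :=
  isClosed_eq continuous_mul continuous_const

variable [PolishSpace M]

theorem analyticSet_setOf_exists_mul_eq_one : AnalyticSet {x : M | ∃ y, x * y = 1} := by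
  rw [setOf_exists_mul_eq_one_eq_image_fst]
  exact isClosed_setOf_mul_eq_one.analyticSet.image_of_continuous continuous_fst

/-- Lusin–Souslin: an injective continuous image of a Borel set is Borel, and commutativity makes
right inverses unique. -/
theorem measurableSet_setOf_exists_mul_eq_one [MeasurableSpace M] [BorelSpace M]
    (hcomm : ∀ x y : M, x * y = y * x) : MeasurableSet {x : M | ∃ y, x * y = 1} := by
  rw [setOf_exists_mul_eq_one_eq_image_fst]
  exact isClosed_setOf_mul_eq_one.measurableSet.image_of_continuousOn_injOn
    continuous_fst.continuousOn (injOn_fst_setOf_mul_eq_one hcomm)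

end RightInverses

/-- in a Polish ring with unity, the set of right-invertible elements is
analytic, and Borel if the ring is commutative. -/
theorem stmt19 (R : Type) [TopologicalSpace R] [Ring R] [IsTopologicalRing R] [PolishSpace R]
    [MeasurableSpace R] [BorelSpace R] :
    MeasureTheory.AnalyticSet {x : R | ∃ y : R, x * y = 1} ∧
    ((∀ x y : R, x * y = y * x) → MeasurableSet {x : R | ∃ y : R, x * y = 1}) :=
  ⟨analyticSet_setOf_exists_mul_eq_one, measurableSet_setOf_exists_mul_eq_one⟩
end
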